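/- arXiv:math/0402085 — 9 statements merged into one kernel-verified Lean document; each statement's English description precedes it below -/
import Mathlib

section
/- The number of subgroups of $\mathbb{Z}^k$ of finite index $n$, summed with weight $n^{-s}$, equals $\zeta(s)\zeta(s-1)\cdots\zeta(s-k+1)$; formally, for real $s > k$, $\sum_{H \subseteq \mathbb{Z}^k,\ [\mathbb{Z}^k:H]<\infty} [\mathbb{Z}^k:H]^{-s} = \prod_{i=0}^{k-1}\zeta(s-i)$. -/
/-!
A finite-index subgroup `H ≤ ℤ × A` is determined by `H₀ = H ∩ A`, the positive generator `d` of
its projection to `ℤ`, and the class in `A ⧸ H₀` of any `w` with `(d, w) ∈ H`; every such triple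
occurs, and `[ℤ × A : H] = [A : H₀] · d`. Summing over the `[A : H₀]` classes and over `d` gives
`∑_H [ℤ × A : H]^(-s) = ζ(s) · ∑_{H₀} [A : H₀]^(-(s-1))`, and induction along `ℤ^(k+1) ≃ ℤ × ℤ^k`
produces `ζ(s) ζ(s-1) ⋯ ζ(s-k+1)`.
-/

open AddSubgroup

theorem Int.zmultiples_index_eq (S : AddSubgroup ℤ) : zmultiples (S.index : ℤ) = S := by
  obtain ⟨a, rfl⟩ := Int.subgroup_cyclic S
  rw [← zmultiples_eq_closure, Int.index_zmultiples, Int.zmultiples_natAbs]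

theorem hasSum_sigma_of_nonneg {β : Type*} {γ : β → Type*} {f : (Σ b, γ b) → ℝ} {g : β → ℝ}
    {a : ℝ} (hf : 0 ≤ f) (hfg : ∀ b, HasSum (fun c => f ⟨b, c⟩) (g b)) (hg : HasSum g a) :
    HasSum f a :=
  hg.sigma_of_hasSum hfg <| (summable_sigma_of_nonneg hf).2
    ⟨fun b => (hfg b).summable, by simpa only [(hfg _).tsum_eq] using hg.summable⟩

theorem hasSum_pnat_rpow_neg {s : ℝ} (hs : 1 < s) :
    HasSum (fun n : ℕ+ => ((n : ℕ) : ℝ) ^ (-s)) (∑' n : ℕ, (n : ℝ) ^ (-s)) := by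
  refine (hasSum_pnat_iff (f := fun n : ℕ => (n : ℝ) ^ (-s))).2 ?_
  rw [Nat.cast_zero, Real.zero_rpow (by linarith), add_zero]
  exact (Real.summable_nat_rpow.2 (by linarith)).hasSum

theorem ofReal_tsum_nat_rpow_neg {s : ℝ} (hs : 1 < s) :
    ((∑' n : ℕ, (n : ℝ) ^ (-s) : ℝ) : ℂ) = riemannZeta s := by
  rw [zeta_eq_tsum_one_div_nat_cpow (by simpa), Complex.ofReal_tsum]
  refine tsum_congr fun n => ?_
  rw [Complex.ofReal_cpow n.cast_nonneg, Complex.ofReal_neg, Complex.cpow_neg, one_div]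
  push_cast
  rfl

namespace AddSubgroup

variable {A : Type*} [AddCommGroup A]

theorem index_eq_index_comap_inr_mul_index_map_fst {B : Type*} [AddCommGroup B]
    (H : AddSubgroup (B × A)) :
    H.index = (H.comap (AddMonoidHom.inr B A)).index * (H.map (AddMonoidHom.fst B A)).index := by
  have hker : (AddMonoidHom.fst B A).ker = (AddMonoidHom.inr B A).range := by
    ext p
    simp [mem_prod, Prod.ext_iff, eq_comm]
  have hsup := comap_map_eq (AddMonoidHom.fst B A) H
  -- with `K = ker fst`: `[_ : H] = [H ⊔ K : H] · [_ : H ⊔ K]`, `H ⊔ K = fst⁻¹ (fst H)`,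
  -- and `[H ⊔ K : H] = [K : H ⊓ K]`
  rw [← H.relIndex_mul_index (le_sup_left : H ≤ H ⊔ (AddMonoidHom.fst B A).ker), ← hsup,
    index_comap_of_surjective _ Prod.fst_surjective, hsup, sup_comm, relIndex_sup_right,
    index_comap, hker]

def extendByInt (H₀ : AddSubgroup A) (d : ℕ+) (c : A ⧸ H₀) : AddSubgroup (ℤ × A) :=
  (zmultiples ((d : ℤ), c)).comap ((AddMonoidHom.id ℤ).prodMap (QuotientAddGroup.mk' H₀))

section extendByInt

variable {H₀ : AddSubgroup A} {d : ℕ+} {c : A ⧸ H₀}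

theorem mem_extendByInt {p : ℤ × A} :
    p ∈ extendByInt H₀ d c ↔ ∃ m : ℤ, m * d = p.1 ∧ m • c = p.2 := by
  simp [extendByInt, mem_zmultiples_iff, Prod.ext_iff]

theorem comap_inr_extendByInt : (extendByInt H₀ d c).comap (AddMonoidHom.inr ℤ A) = H₀ := by
  ext a
  simp [mem_extendByInt, d.ne_zero, eq_comm (a := (0 : A ⧸ H₀))]

theorem map_fst_extendByInt :
    (extendByInt H₀ d c).map (AddMonoidHom.fst ℤ A) = zmultiples (d : ℤ) := by
  ext n
  simp only [mem_map, mem_extendByInt, AddMonoidHom.coe_fst, mem_zmultiples_iff, smul_eq_mul]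
  constructor
  · rintro ⟨p, ⟨m, hm, -⟩, rfl⟩
    exact ⟨m, hm⟩
  · rintro ⟨m, rfl⟩
    exact ⟨(m * d, (m • c).out), ⟨m, rfl, by simp⟩, rfl⟩

theorem index_extendByInt : (extendByInt H₀ d c).index = H₀.index * d := by
  rw [index_eq_index_comap_inr_mul_index_map_fst, comap_inr_extendByInt, map_fst_extendByInt,
    Int.index_zmultiples, Int.natAbs_natCast]

end extendByInt

theorem extendByInt_injective : Function.Injective
    (fun x : Σ H₀ : AddSubgroup A, ℕ+ × (A ⧸ H₀) => extendByInt x.1 x.2.1 x.2.2) := by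
  rintro ⟨H₀, d, c⟩ ⟨H₀', d', c'⟩ h
  obtain rfl : H₀ = H₀' := by
    simpa only [comap_inr_extendByInt] using congrArg (comap (AddMonoidHom.inr ℤ A)) h
  obtain rfl : d = d' := by
    simpa [map_fst_extendByInt] using congrArg (fun H => (H.map (AddMonoidHom.fst ℤ A)).index) h
  have h' : extendByInt H₀ d c = extendByInt H₀ d c' := h
  obtain ⟨m, hm, hmc⟩ := mem_extendByInt.1
    (h' ▸ mem_extendByInt.2 ⟨1, one_mul _, by simp⟩ : ((d : ℤ), c.out) ∈ extendByInt H₀ d c')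
  obtain rfl : m = 1 := by simpa [d.ne_zero] using hm
  rw [one_zsmul, QuotientAddGroup.out_eq'] at hmc
  rw [hmc]

theorem exists_extendByInt_eq {H : AddSubgroup (ℤ × A)} (hH : H.index ≠ 0) :
    ∃ (d : ℕ+) (c : A ⧸ H.comap (AddMonoidHom.inr ℤ A)), extendByInt _ d c = H := by
  rw [index_eq_index_comap_inr_mul_index_map_fst] at hH
  obtain ⟨d, hd⟩ : ∃ d : ℕ+, zmultiples (d : ℤ) = H.map (AddMonoidHom.fst ℤ A) :=
    ⟨⟨_, Nat.pos_of_ne_zero (right_ne_zero_of_mul hH)⟩, Int.zmultiples_index_eq _⟩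
  obtain ⟨⟨_, w⟩, hw, rfl⟩ : (d : ℤ) ∈ H.map (AddMonoidHom.fst ℤ A) := hd ▸ mem_zmultiples _
  have mem_iff (p : ℤ × A) (m : ℤ) (hm : m * d = p.1) :
      p ∈ H ↔ m • (w : A ⧸ H.comap (AddMonoidHom.inr ℤ A)) = p.2 := by
    have hp : (0, p.2 - m • w) + m • ((d : ℤ), w) = p := by
      ext <;> simp [← hm]
    conv_lhs => rw [← hp, add_mem_cancel_right (zsmul_mem hw m)]
    rw [← QuotientAddGroup.mk_zsmul, eq_comm, QuotientAddGroup.eq_iff_sub_mem]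
    rfl
  refine ⟨d, w, ext fun p => ⟨fun hp => ?_, fun hp => ?_⟩⟩
  · obtain ⟨m, hm, hmc⟩ := mem_extendByInt.1 hp
    exact (mem_iff p m hm).2 hmc
  · obtain ⟨m, hm⟩ := mem_zmultiples_iff.1 (hd ▸ mem_map_of_mem (AddMonoidHom.fst ℤ A) hp)
    exact mem_extendByInt.2 ⟨m, hm, (mem_iff p m hm).1 hp⟩

/-- Also true for `[A : H₀] = 0`, where both sides vanish because `0 ^ (-s) = 0`. -/
theorem hasSum_index_mul_pnat_rpow_neg (H₀ : AddSubgroup A) {s z : ℝ} (hs : 1 < s)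
    (hz : HasSum (fun d : ℕ+ => ((d : ℕ) : ℝ) ^ (-s)) z) :
    HasSum (fun p : ℕ+ × (A ⧸ H₀) => ((H₀.index * (p.1 : ℕ) : ℕ) : ℝ) ^ (-s))
      (z * (H₀.index : ℝ) ^ (-(s - 1))) := by
  rcases eq_or_ne H₀.index 0 with h | h
  · simp only [h, zero_mul, Nat.cast_zero, Real.zero_rpow (by linarith : -s ≠ 0),
      Real.zero_rpow (by linarith : -(s - 1) ≠ 0), mul_zero]
    exact hasSum_zero
  have : Fintype (A ⧸ H₀) := @Fintype.ofFinite _ (index_ne_zero_iff_finite.1 h)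
  have hi : (0 : ℝ) ≤ H₀.index := H₀.index.cast_nonneg
  have hc := hasSum_fintype fun _ : A ⧸ H₀ => (H₀.index : ℝ) ^ (-s)
  have hprod := hz.mul hc <|
    hz.summable.mul_of_nonneg hc.summable (fun _ => by positivity) fun _ => by positivity
  have hval : (Nat.card (A ⧸ H₀) : ℝ) * (H₀.index : ℝ) ^ (-s) = (H₀.index : ℝ) ^ (-(s - 1)) := by
    rw [← index_eq_card, ← Real.rpow_one_add' hi (by linarith)]
    ring_nf
  rw [← hval, Nat.card_eq_fintype_card, ← nsmul_eq_mul, ← Finset.card_univ, ← Finset.sum_const]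
  refine hprod.congr_fun fun p => ?_
  rw [Nat.cast_mul, Real.mul_rpow hi p.1.val.cast_nonneg, mul_comm]

theorem hasSum_index_rpow_neg_int_prod {s z a : ℝ} (hs : 1 < s)
    (hz : HasSum (fun d : ℕ+ => ((d : ℕ) : ℝ) ^ (-s)) z)
    (ha : HasSum (fun H₀ : AddSubgroup A => (H₀.index : ℝ) ^ (-(s - 1))) a) :
    HasSum (fun H : AddSubgroup (ℤ × A) => (H.index : ℝ) ^ (-s)) (z * a) := by
  rw [← extendByInt_injective.hasSum_iff fun H hH => ?_]
  · refine hasSum_sigma_of_nonneg (fun _ => Real.rpow_nonneg (Nat.cast_nonneg _) _)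
      (fun H₀ => ?_) (ha.mul_left z)
    simpa only [Function.comp_apply, index_extendByInt] using
      H₀.hasSum_index_mul_pnat_rpow_neg hs hz
  · have hH : H.index = 0 := by
      by_contra h
      obtain ⟨d, c, hdc⟩ := exists_extendByInt_eq h
      exact hH ⟨⟨_, d, c⟩, hdc⟩
    rw [hH, Nat.cast_zero, Real.zero_rpow (by linarith)]

theorem hasSum_index_rpow_neg_congr {G G' : Type*} [AddCommGroup G] [AddCommGroup G']
    (e : G ≃+ G') {s a : ℝ} :
    HasSum (fun H : AddSubgroup G' => (H.index : ℝ) ^ (-s)) a ↔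
      HasSum (fun H : AddSubgroup G => (H.index : ℝ) ^ (-s)) a := by
  rw [← e.mapAddSubgroup.toEquiv.hasSum_iff]
  simp [Function.comp_def, index_map_equiv]

theorem hasSum_index_rpow_neg_pi_int (k : ℕ) {s : ℝ} (hs : k < s) :
    HasSum (fun H : AddSubgroup (Fin k → ℤ) => (H.index : ℝ) ^ (-s))
      (∏ i ∈ Finset.range k, ∑' n : ℕ, (n : ℝ) ^ (-(s - i))) := by
  induction k generalizing s with
  | zero =>
    have hH (H : AddSubgroup (Fin 0 → ℤ)) : H.index = 1 := index_eq_one.2 (Subsingleton.elim _ _)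
    simp only [hH, Nat.cast_one, Real.one_rpow, Finset.range_zero, Finset.prod_empty]
    exact hasSum_unique _
  | succ k ih =>
    rw [hasSum_index_rpow_neg_congr (Fin.consLinearEquiv ℤ fun _ => ℤ).toAddEquiv,
      Finset.prod_range_succ', mul_comm]
    push_cast at hs
    have hshift : ∏ i ∈ Finset.range k, ∑' n : ℕ, (n : ℝ) ^ (-(s - (i + 1 : ℕ))) =
        ∏ i ∈ Finset.range k, ∑' n : ℕ, (n : ℝ) ^ (-(s - 1 - i)) := by
      simp only [Nat.cast_succ, sub_add_eq_sub_sub_swap]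
    rw [hshift, Nat.cast_zero, sub_zero]
    exact hasSum_index_rpow_neg_int_prod (by linarith) (hasSum_pnat_rpow_neg (by linarith))
      (ih (by linarith))

end AddSubgroup

theorem stmt0_general (k : ℕ) (s : ℝ) (hs : (k : ℝ) < s) :
    Summable (fun H : AddSubgroup (Fin k → ℤ) => (H.index : ℝ) ^ (-s)) ∧
    ((∑' H : AddSubgroup (Fin k → ℤ), (H.index : ℝ) ^ (-s) : ℝ) : ℂ) =
      ∏ i ∈ Finset.range k, riemannZeta ((s : ℂ) - (i : ℕ)) := by
  have h := AddSubgroup.hasSum_index_rpow_neg_pi_int k hs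
  refine ⟨h.summable, ?_⟩
  rw [h.tsum_eq, Complex.ofReal_prod]
  refine Finset.prod_congr rfl fun i hi => ?_
  have hik : (i : ℝ) + 1 ≤ k := by exact_mod_cast Finset.mem_range.1 hi
  rw [ofReal_tsum_nat_rpow_neg (by linarith)]
  push_cast
  rfl

/-- For `k ≥ 1` and real `s > k`, the sum over all finite-index subgroups `H` of `ℤ^k`
of `[ℤ^k : H]^{-s}` converges and equals `ζ(s) ζ(s-1) ⋯ ζ(s-k+1)`.
Subgroups of infinite index have `index = 0` and contribute `0^{-s} = 0`. -/
theorem stmt0 (k : ℕ) (hk : 1 ≤ k) (s : ℝ) (hs : (k : ℝ) < s) :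
    Summable (fun H : AddSubgroup (Fin k → ℤ) => (H.index : ℝ) ^ (-s)) ∧
    ((∑' H : AddSubgroup (Fin k → ℤ), (H.index : ℝ) ^ (-s) : ℝ) : ℂ) =
      ∏ i ∈ Finset.range k, riemannZeta ((s : ℂ) - (i : ℕ)) :=
  stmt0_general k s hs
end

section
/- For every real $T > 0$ and $k \ge 0$, the number of subgroups $H \subseteq \mathbb{Z}^k$ with $[\mathbb{Z}^k : H] \le T$ is at most $T^k$. -/
/-! A finite-index subgroup `H ≤ ℤ × A` is determined by `K = H ∩ A`, the index `d` of its
projection `dℤ` to `ℤ`, and the class modulo `K` of any `a` with `(d, a) ∈ H`; moreover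
`[ℤ × A : H] = d · [A : K]`. Hence above a fixed `K` of index `m` there are at most
`⌊N / m⌋ · m ≤ N` subgroups of index at most `N`, and induction along `ℤ^(k+1) ≃ ℤ × ℤ^k` bounds
the number of subgroups of `ℤ^k` of index at most `T` by `⌊T⌋^k`. -/

open Set in
theorem Set.encard_le_mul_encard_image {α β : Type*} {f : α → β} {s : Set α} {n : ℕ}
    (hfiber : ∀ b ∈ f '' s, (s ∩ f ⁻¹' {b}).encard ≤ n) : s.encard ≤ n * (f '' s).encard := by
  obtain hfin | hinf := (f '' s).finite_or_infinite
  · have hcover : s ⊆ ⋃ b ∈ hfin.toFinset, s ∩ f ⁻¹' {b} := fun a ha ↦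
      mem_biUnion (hfin.mem_toFinset.2 (mem_image_of_mem f ha)) ⟨ha, rfl⟩
    calc s.encard ≤ ∑ b ∈ hfin.toFinset, (s ∩ f ⁻¹' {b}).encard :=
          (encard_le_encard hcover).trans (hfin.toFinset.set_encard_biUnion_le _)
      _ ≤ ∑ _b ∈ hfin.toFinset, (n : ℕ∞) :=
          Finset.sum_le_sum fun b hb ↦ hfiber b (hfin.mem_toFinset.1 hb)
      _ = n * (f '' s).encard := by
          rw [Finset.sum_const, nsmul_eq_mul, hfin.encard_eq_coe_toFinset_card, mul_comm]
  · obtain ⟨a, ha⟩ := hinf.nonempty.of_image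
    have hn : (n : ℕ∞) ≠ 0 := by
      refine (lt_of_lt_of_le ?_ (hfiber (f a) (mem_image_of_mem f ha))).ne'
      exact encard_pos.2 ⟨a, ha, rfl⟩
    rw [hinf.encard_eq, ENat.mul_top hn]
    exact le_top

-- `H.index = 0` when `H` has infinite index, hence the condition `0 < H.index`.
def subgroupsOfIndexLE (A : Type*) [AddCommGroup A] (N : ℕ) : Set (AddSubgroup A) :=
  {H | 0 < H.index ∧ H.index ≤ N}

theorem encard_subgroupsOfIndexLE_congr {A B : Type*} [AddCommGroup A] [AddCommGroup B]
    (e : A ≃+ B) (N : ℕ) :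
    (subgroupsOfIndexLE A N).encard = (subgroupsOfIndexLE B N).encard :=
  Set.encard_congr <| e.mapAddSubgroup.toEquiv.subtypeEquiv fun H ↦ by
    simp [subgroupsOfIndexLE, AddSubgroup.index_map_equiv]

theorem AddSubgroup.zmultiples_index_int (Z : AddSubgroup ℤ) : zmultiples (Z.index : ℤ) = Z := by
  obtain ⟨a, rfl⟩ := Int.subgroup_cyclic Z
  rw [← zmultiples_eq_closure, Int.index_zmultiples, Int.zmultiples_natAbs]

theorem AddSubgroup.index_map_fst_mul_index_comap_inr {B A : Type*} [AddCommGroup B]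
    [AddCommGroup A] (H : AddSubgroup (B × A)) :
    (H.map (AddMonoidHom.fst B A)).index * (H.comap (AddMonoidHom.inr B A)).index = H.index := by
  have hker : (AddMonoidHom.inr B A).range = (AddMonoidHom.fst B A).ker := by
    ext ⟨b, a⟩
    simp [mem_prod, Prod.ext_iff, eq_comm]
  have hfst : (H.map (AddMonoidHom.fst B A)).index = (H ⊔ (AddMonoidHom.fst B A).ker).index := by
    rw [index_map, AddMonoidHom.range_eq_top.2 Prod.fst_surjective, index_top, mul_one]
  have hinr : (H.comap (AddMonoidHom.inr B A)).index
      = H.relIndex (H ⊔ (AddMonoidHom.fst B A).ker) := by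
    rw [index_comap, hker, ← relIndex_sup_right, sup_comm]
  rw [hfst, hinr, mul_comm]
  exact relIndex_mul_index le_sup_left

section IntProd

variable {A : Type*} [AddCommGroup A]

open Set AddSubgroup

theorem AddSubgroup.le_of_mem_of_comap_inr_le {H₁ H₂ : AddSubgroup (ℤ × A)} {d : ℤ} {a : A}
    (hd : ∀ x ∈ H₁, d ∣ x.1) (h₁ : (d, a) ∈ H₁) (h₂ : (d, a) ∈ H₂)
    (hK : H₁.comap (AddMonoidHom.inr ℤ A) ≤ H₂.comap (AddMonoidHom.inr ℤ A)) : H₁ ≤ H₂ := by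
  rintro ⟨n, b⟩ hx
  obtain ⟨q, rfl⟩ := hd _ hx
  have hrest : (0, b - q • a) ∈ H₂ := by
    refine hK (?_ : (0, b - q • a) ∈ H₁)
    convert sub_mem hx (zsmul_mem h₁ q) using 1
    ext <;> simp [mul_comm]
  convert add_mem (zsmul_mem h₂ q) hrest using 1
  ext <;> simp [mul_comm]

theorem AddSubgroup.dvd_fst_of_mem (H : AddSubgroup (ℤ × A)) {x : ℤ × A} (hx : x ∈ H) :
    ((H.map (AddMonoidHom.fst ℤ A)).index : ℤ) ∣ x.1 := by
  rw [← Int.mem_zmultiples_iff, zmultiples_index_int]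
  exact mem_map_of_mem _ hx

theorem AddSubgroup.exists_index_map_fst_mem (H : AddSubgroup (ℤ × A)) :
    ∃ a : A, (((H.map (AddMonoidHom.fst ℤ A)).index : ℤ), a) ∈ H := by
  have h := (H.map (AddMonoidHom.fst ℤ A)).zmultiples_index_int ▸
    mem_zmultiples ((H.map (AddMonoidHom.fst ℤ A)).index : ℤ)
  obtain ⟨⟨n, a⟩, hx, rfl⟩ := mem_map.1 h
  exact ⟨a, hx⟩

theorem AddSubgroup.index_map_fst_mem_Icc {N : ℕ} {H : AddSubgroup (ℤ × A)}
    (hH : H ∈ subgroupsOfIndexLE (ℤ × A) N) :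
    (H.map (AddMonoidHom.fst ℤ A)).index ∈ Icc 1 (N / (H.comap (AddMonoidHom.inr ℤ A)).index) := by
  obtain ⟨hpos, hle⟩ := hH
  rw [← H.index_map_fst_mul_index_comap_inr] at hpos hle
  exact ⟨pos_of_mul_pos_left hpos (Nat.zero_le _),
    (Nat.le_div_iff_mul_le (pos_of_mul_pos_right hpos (Nat.zero_le _))).2 hle⟩

theorem encard_setOf_comap_inr_eq_le (N : ℕ) (K : AddSubgroup A) :
    {H ∈ subgroupsOfIndexLE (ℤ × A) N | H.comap (AddMonoidHom.inr ℤ A) = K}.encard ≤ N := by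
  choose a ha using fun H : AddSubgroup (ℤ × A) ↦ H.exists_index_map_fst_mem
  set g : AddSubgroup (ℤ × A) → ℕ × (A ⧸ K) :=
    fun H ↦ ((H.map (AddMonoidHom.fst ℤ A)).index, (a H : A ⧸ K))
  have hmaps : MapsTo g {H ∈ subgroupsOfIndexLE (ℤ × A) N | H.comap (AddMonoidHom.inr ℤ A) = K}
      (Icc 1 (N / K.index) ×ˢ univ) := by
    rintro H ⟨hH, rfl⟩
    exact ⟨index_map_fst_mem_Icc hH, mem_univ _⟩
  have hinj : InjOn g {H ∈ subgroupsOfIndexLE (ℤ × A) N | H.comap (AddMonoidHom.inr ℤ A) = K} := by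
    rintro H₁ ⟨-, hK₁⟩ H₂ ⟨-, hK₂⟩ hg
    obtain ⟨hindex, hcoset⟩ := Prod.mk.inj hg
    have hmem : (((H₁.map (AddMonoidHom.fst ℤ A)).index : ℤ), a H₁) ∈ H₂ := by
      have hk : a H₂ - a H₁ ∈ H₂.comap (AddMonoidHom.inr ℤ A) := by
        rw [hK₂, sub_eq_neg_add]
        exact QuotientAddGroup.eq.1 hcoset
      rw [hindex]
      convert sub_mem (ha H₂) hk using 1
      ext <;> simp
    have hKeq := hK₁.trans hK₂.symm
    refine le_antisymm (le_of_mem_of_comap_inr_le (fun x hx ↦ H₁.dvd_fst_of_mem hx) (ha H₁) hmem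
      hKeq.le) (le_of_mem_of_comap_inr_le (fun x hx ↦ ?_) hmem (ha H₁) hKeq.ge)
    rw [hindex]; exact H₂.dvd_fst_of_mem hx
  calc _ ≤ (Icc 1 (N / K.index) ×ˢ (univ : Set (A ⧸ K))).encard :=
        encard_le_encard_of_injOn hmaps hinj
    _ = (N / K.index : ℕ) * ENat.card (A ⧸ K) := by
        rw [encard_prod, encard_univ, ← Finset.coe_Icc, encard_coe_eq_coe_finsetCard, Nat.card_Icc,
          Nat.add_sub_cancel]
    _ ≤ N := by
      obtain hK | hK := eq_or_ne K.index 0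
      · simp [hK]
      · have : K.FiniteIndex := ⟨hK⟩
        rw [ENat.card_eq_coe_natCard, ← index_eq_card]
        exact_mod_cast Nat.div_mul_le_self N K.index

theorem comap_inr_mem_subgroupsOfIndexLE {N : ℕ} {H : AddSubgroup (ℤ × A)}
    (hH : H ∈ subgroupsOfIndexLE (ℤ × A) N) :
    H.comap (AddMonoidHom.inr ℤ A) ∈ subgroupsOfIndexLE A N := by
  obtain ⟨hpos, hle⟩ := hH
  have hdvd : (H.comap (AddMonoidHom.inr ℤ A)).index ∣ H.index :=
    Dvd.intro_left _ H.index_map_fst_mul_index_comap_inr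
  exact ⟨Nat.pos_of_dvd_of_pos hdvd hpos, (Nat.le_of_dvd hpos hdvd).trans hle⟩

theorem encard_subgroupsOfIndexLE_int_prod_le (N : ℕ) :
    (subgroupsOfIndexLE (ℤ × A) N).encard ≤ N * (subgroupsOfIndexLE A N).encard :=
  calc _ ≤ N * ((·.comap (AddMonoidHom.inr ℤ A)) '' subgroupsOfIndexLE (ℤ × A) N).encard :=
        encard_le_mul_encard_image fun K _ ↦ encard_setOf_comap_inr_eq_le N K
    _ ≤ N * (subgroupsOfIndexLE A N).encard := by
        gcongr
        rintro _ ⟨H, hH, rfl⟩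
        exact comap_inr_mem_subgroupsOfIndexLE hH

end IntProd

theorem encard_subgroupsOfIndexLE_int_pi_le (k N : ℕ) :
    (subgroupsOfIndexLE (Fin k → ℤ) N).encard ≤ N ^ k := by
  induction k with
  | zero =>
    rw [pow_zero]
    exact Set.encard_le_one_iff_subsingleton.2 Set.subsingleton_of_subsingleton
  | succ k ih =>
    calc _ = (subgroupsOfIndexLE (ℤ × (Fin k → ℤ)) N).encard :=
          (encard_subgroupsOfIndexLE_congr (Fin.consLinearEquiv ℤ fun _ ↦ ℤ).toAddEquiv N).symm
      _ ≤ N * N ^ k := (encard_subgroupsOfIndexLE_int_prod_le N).trans (by gcongr)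
      _ = N ^ (k + 1) := by ring

/-- For every real `T > 0` and every `k ≥ 0`, the number of finite-index subgroups
`H ⊆ ℤ^k` with `[ℤ^k : H] ≤ T` is at most `T^k`. -/
theorem stmt2 (k : ℕ) (T : ℝ) (hT : 0 < T) :
    ({H : AddSubgroup (Fin k → ℤ) | 0 < H.index ∧ (H.index : ℝ) ≤ T}.ncard : ℝ) ≤ T ^ k := by
  have hset : {H : AddSubgroup (Fin k → ℤ) | 0 < H.index ∧ (H.index : ℝ) ≤ T} =
      subgroupsOfIndexLE (Fin k → ℤ) ⌊T⌋₊ := by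
    ext H
    exact and_congr_right fun hpos ↦ (Nat.le_floor_iff' hpos.ne').symm
  have hencard := encard_subgroupsOfIndexLE_int_pi_le k ⌊T⌋₊
  have hcard : (subgroupsOfIndexLE (Fin k → ℤ) ⌊T⌋₊).ncard ≤ ⌊T⌋₊ ^ k := by
    rw [← (Set.finite_of_encard_le_coe (by exact_mod_cast hencard)).cast_ncard_eq] at hencard
    exact_mod_cast hencard
  calc _ ≤ (⌊T⌋₊ : ℝ) ^ k := by rw [hset]; exact_mod_cast hcard
    _ ≤ T ^ k := by gcongr; exact Nat.floor_le hT.le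
end

section
/- For every natural number $k > 0$ there is a constant $c$ such that for all $S \ge 1$ and $T > 0$, the number of finite-index subgroups $L \subseteq \mathbb{Z}^k$ with $[\mathbb{Z}^k:L] \le T^k$ and containing a nonzero vector of Euclidean length at most $T/S$ is at most $c\, S^{-k} T^{k^2}$. -/
/-!
If `u₀ ∈ ℤ^k` is unimodular (`r u₀ = 1` for a homomorphism `r : ℤ^k → ℤ`) and `L ∩ ℤ u₀ = ℤ a u₀`,
then `L` projects onto a subgroup of `ℤ^k / ℤ u₀ ≅ ℤ^(k-1)` of index `[ℤ^k : L] / |a|`, and at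
most `|a|^(k-1)` subgroups `L` have a given projection.
Induction on `k` then gives at most `N^k` subgroups of index `≤ N` in `ℤ^k`, and at most `N^(k-1)`
of them in which a given nonzero `u` is a primitive vector. Every `L` counted in the theorem has a
primitive vector of length `≤ T/S`, and there are at most `(3T/S)^k` candidates for it, so the
count is at most `(3T/S)^k (T^k)^(k-1)`.
-/

open Set AddSubgroup

theorem Set.encard_le_encard_mul_of_subset_biUnion {α ι : Type*} {s : Set α} {t : Set ι}
    {g : ι → Set α} {K : ℕ∞} (hs : s ⊆ ⋃ i ∈ t, g i) (hg : ∀ i ∈ t, (g i).encard ≤ K) :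
    s.encard ≤ t.encard * K := by
  rcases t.finite_or_infinite with ht | ht
  · lift t to Finset ι using ht
    calc s.encard ≤ (⋃ i ∈ t, g i).encard := encard_le_encard (by simpa using hs)
      _ ≤ ∑ i ∈ t, (g i).encard := t.set_encard_biUnion_le g
      _ ≤ t.card • K := Finset.sum_le_card_nsmul _ _ _ (by simpa using hg)
      _ = (t : Set ι).encard * K := by simp [nsmul_eq_mul]
  rcases eq_or_ne K 0 with rfl | hK
  · have : s = ∅ := subset_empty_iff.1 <| hs.trans <| by simpa using hg
    simp [this]
  · simp [ht.encard_eq, ENat.top_mul hK]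

def subgroupsOfIndexAtMost (G : Type*) [AddGroup G] (N : ℕ) : Set (AddSubgroup G) :=
  {L | 0 < L.index ∧ L.index ≤ N}

theorem AddSubgroup.exists_zsmul_mem_iff_dvd {G : Type*} [AddGroup G] (L : AddSubgroup G) (u : G) :
    ∃ a : ℕ, ∀ n : ℤ, n • u ∈ L ↔ (a : ℤ) ∣ n := by
  obtain ⟨b, hb⟩ := Int.subgroup_cyclic (L.comap (zmultiplesHom G u))
  refine ⟨b.natAbs, fun n => ?_⟩
  rw [Int.natAbs_dvd, ← Int.mem_zmultiples_iff, zmultiples_eq_closure, ← hb]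
  rfl

theorem AddSubgroup.dvd_index_of_zsmul_mem_iff {G : Type*} [AddCommGroup G] {L : AddSubgroup G}
    {u : G} {a : ℕ} (h : ∀ n : ℤ, n • u ∈ L ↔ (a : ℤ) ∣ n) : a ∣ L.index := by
  exact_mod_cast (h L.index).1 (by simpa using L.nsmul_index_mem u)

section Fibration

variable {G : Type*} [AddCommGroup G] {m : ℕ} {π : G →+ (Fin m → ℤ)} {u₀ : G} {r : G →+ ℤ}
  {L : AddSubgroup G} {a : ℤ}

theorem mem_iff_dvd_of_mem_ker (hker : π.ker = zmultiples u₀) (hr : r u₀ = 1)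
    (hL : ∀ n : ℤ, n • u₀ ∈ L ↔ a ∣ n) {x : G} (hx : x ∈ π.ker) : x ∈ L ↔ a ∣ r x := by
  rw [hker] at hx
  obtain ⟨n, rfl⟩ := hx
  simpa [hr] using hL n

theorem index_eq_index_map_mul (hπ : Function.Surjective π) (hker : π.ker = zmultiples u₀)
    (hL : ∀ n : ℤ, n • u₀ ∈ L ↔ a ∣ n) : L.index = (L.map π).index * a.natAbs := by
  have hcomap : L.comap (zmultiplesHom G u₀) = zmultiples a := by
    ext n
    simp [Int.mem_zmultiples_iff, hL]
  rw [← L.relIndex_mul_index (le_sup_left : L ≤ L ⊔ π.ker), relIndex_sup_left,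
    ← comap_map_eq, index_comap_of_surjective _ hπ, hker, ← range_zmultiplesHom, ← index_comap,
    hcomap, Int.index_zmultiples, mul_comm]

theorem le_of_lifts_dvd_sub (hker : π.ker = zmultiples u₀) (hr : r u₀ = 1) {L₁ L₂ : AddSubgroup G}
    (hL₁ : ∀ n : ℤ, n • u₀ ∈ L₁ ↔ a ∣ n) (hL₂ : ∀ n : ℤ, n • u₀ ∈ L₂ ↔ a ∣ n)
    {n : ℕ} {b : Fin n → Fin m → ℤ} (hspan : ∀ y ∈ L₁, ∃ t : Fin n → ℤ, π y = ∑ i, t i • b i)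
    {y₁ y₂ : Fin n → G} (h₁ : ∀ i, y₁ i ∈ L₁ ∧ π (y₁ i) = b i)
    (h₂ : ∀ i, y₂ i ∈ L₂ ∧ π (y₂ i) = b i) (hdvd : ∀ i, a ∣ r (y₁ i) - r (y₂ i)) :
    L₁ ≤ L₂ := by
  intro y hy
  obtain ⟨t, ht⟩ := hspan y hy
  set z₁ := ∑ i, t i • y₁ i
  set z₂ := ∑ i, t i • y₂ i
  have hz₁ : z₁ ∈ L₁ := sum_mem fun i _ => zsmul_mem (h₁ i).1 _
  have hz₂ : z₂ ∈ L₂ := sum_mem fun i _ => zsmul_mem (h₂ i).1 _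
  have hπ₁ : π z₁ = π y := by simp [z₁, (h₁ _).2, ht]
  have hπ₂ : π z₂ = π y := by simp [z₂, (h₂ _).2, ht]
  have hyz₁ : a ∣ r (y - z₁) :=
    (mem_iff_dvd_of_mem_ker hker hr hL₁ (by simp [hπ₁])).1 (sub_mem hy hz₁)
  have hz₁z₂ : a ∣ r (z₁ - z₂) := by
    simp only [z₁, z₂, map_sub, map_sum, map_zsmul, smul_eq_mul, ← Finset.sum_sub_distrib,
      ← mul_sub]
    exact Finset.dvd_sum fun i _ => dvd_mul_of_dvd_right (hdvd i) _
  have hyz₂ : y - z₂ ∈ L₂ :=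
    (mem_iff_dvd_of_mem_ker hker hr hL₂ (by simp [hπ₂])).2
      (by simpa using dvd_add hyz₁ hz₁z₂)
  simpa using add_mem hyz₂ hz₂

theorem encard_setOf_map_eq_le (hker : π.ker = zmultiples u₀) (hr : r u₀ = 1) (ha : a ≠ 0)
    (L' : AddSubgroup (Fin m → ℤ)) :
    {L : AddSubgroup G | (∀ n : ℤ, n • u₀ ∈ L ↔ a ∣ n) ∧ L.map π = L'}.encard ≤
      (a.natAbs ^ m : ℕ) := by
  classical
  obtain ⟨n, b⟩ := Submodule.basisOfPid (Pi.basisFun ℤ (Fin m)) L'.toIntSubmodule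
  have hn : n ≤ m := by
    simpa using (b.linearIndependent.map' _ (Submodule.ker_subtype _)).fintype_card_le_finrank
  have hlift : ∀ L : AddSubgroup G, L.map π = L' → ∀ i, ∃ y ∈ L, π y = b i := by
    rintro L rfl i
    exact (b i).2
  -- A subgroup in the fibre is determined by the residues mod `a` of `r` on lifts of a basis of
  -- `L'`, since two lifts of the same element differ by a multiple of `u₀`.
  let residues (L : AddSubgroup G) (i : Fin n) : ZMod a.natAbs :=
    if h : ∃ y ∈ L, π y = b i then (r h.choose : ZMod a.natAbs) else 0
  have hle : ∀ L₁ L₂ : AddSubgroup G, (∀ n : ℤ, n • u₀ ∈ L₁ ↔ a ∣ n) ∧ L₁.map π = L' →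
      (∀ n : ℤ, n • u₀ ∈ L₂ ↔ a ∣ n) ∧ L₂.map π = L' → residues L₁ = residues L₂ → L₁ ≤ L₂ := by
    rintro L₁ L₂ ⟨hL₁, hm₁⟩ ⟨hL₂, hm₂⟩ hres
    refine le_of_lifts_dvd_sub hker hr hL₁ hL₂ (b := fun i => b i) (fun y hy => ?_)
      (fun i => (hlift L₁ hm₁ i).choose_spec) (fun i => (hlift L₂ hm₂ i).choose_spec) fun i => ?_
    · have hy' : π y ∈ L'.toIntSubmodule := hm₁ ▸ mem_map_of_mem π hy
      refine ⟨b.repr ⟨π y, hy'⟩, ?_⟩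
      have := congrArg Subtype.val (b.sum_repr ⟨π y, hy'⟩)
      rw [Submodule.coe_sum] at this
      exact this.symm
    · have := congrFun hres i
      simp only [residues, dif_pos (hlift L₁ hm₁ i), dif_pos (hlift L₂ hm₂ i)] at this
      rw [← Int.natAbs_dvd, ← dvd_neg, neg_sub]
      exact (ZMod.intCast_eq_intCast_iff_dvd_sub _ _ _).1 this
  have hinj : InjOn residues {L | (∀ n : ℤ, n • u₀ ∈ L ↔ a ∣ n) ∧ L.map π = L'} :=
    fun L₁ h₁ L₂ h₂ h => le_antisymm (hle L₁ L₂ h₁ h₂ h) (hle L₂ L₁ h₂ h₁ h.symm)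
  have : NeZero a.natAbs := ⟨Int.natAbs_ne_zero.2 ha⟩
  calc _ = (residues '' _).encard := hinj.encard_image.symm
    _ ≤ ENat.card (Fin n → ZMod a.natAbs) := encard_le_card
    _ = (a.natAbs ^ n : ℕ) := by simp
    _ ≤ (a.natAbs ^ m : ℕ) := by
      exact_mod_cast Nat.pow_le_pow_right (Int.natAbs_pos.2 ha) hn

end Fibration

theorem encard_setOf_zsmul_mem_iff_dvd_le {G : Type*} [AddCommGroup G] {m : ℕ}
    (ih : ∀ N : ℕ, (subgroupsOfIndexAtMost (Fin m → ℤ) N).encard ≤ (N ^ m : ℕ))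
    {π : G →+ (Fin m → ℤ)} (hπ : Function.Surjective π) {u₀ : G} (hker : π.ker = zmultiples u₀)
    {r : G →+ ℤ} (hr : r u₀ = 1) {a : ℤ} (ha : a ≠ 0) (N : ℕ) :
    {L | L ∈ subgroupsOfIndexAtMost G N ∧ ∀ n : ℤ, n • u₀ ∈ L ↔ a ∣ n}.encard ≤ (N ^ m : ℕ) := by
  have hcover : {L | L ∈ subgroupsOfIndexAtMost G N ∧ ∀ n : ℤ, n • u₀ ∈ L ↔ a ∣ n} ⊆
      ⋃ L' ∈ subgroupsOfIndexAtMost (Fin m → ℤ) (N / a.natAbs),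
        {L : AddSubgroup G | (∀ n : ℤ, n • u₀ ∈ L ↔ a ∣ n) ∧ L.map π = L'} := by
    rintro L ⟨⟨hpos, hle⟩, hL⟩
    have hidx := index_eq_index_map_mul hπ hker hL
    refine mem_biUnion (x := L.map π) ⟨?_, ?_⟩ ⟨hL, rfl⟩
    · exact Nat.pos_of_mul_pos_right (hidx ▸ hpos)
    · exact (Nat.le_div_iff_mul_le (Int.natAbs_pos.2 ha)).2 (hidx ▸ hle)
  calc _ ≤ (subgroupsOfIndexAtMost (Fin m → ℤ) (N / a.natAbs)).encard * (a.natAbs ^ m : ℕ) :=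
        encard_le_encard_mul_of_subset_biUnion hcover fun L' _ =>
          encard_setOf_map_eq_le hker hr ha L'
    _ ≤ ((N / a.natAbs) ^ m : ℕ) * (a.natAbs ^ m : ℕ) := by gcongr; exact ih _
    _ ≤ (N ^ m : ℕ) := by
      rw [← Nat.cast_mul, ← mul_pow, Nat.cast_le]
      exact Nat.pow_le_pow_left (Nat.div_mul_le_self _ _) _

theorem exists_surjective_ker_eq_zmultiples {m : ℕ} {u₀ : Fin (m + 1) → ℤ}
    {r : (Fin (m + 1) → ℤ) →+ ℤ} (hr : r u₀ = 1) :
    ∃ π : (Fin (m + 1) → ℤ) →+ (Fin m → ℤ), Function.Surjective π ∧ π.ker = zmultiples u₀ := by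
  let f := r.toIntLinearMap
  have hf : Function.Surjective f := fun n => ⟨n • u₀, by
    change r (n • u₀) = n
    rw [map_zsmul, hr, smul_eq_mul, mul_one]⟩
  have hK : Module.finrank ℤ (LinearMap.ker f) = m := by
    have := (LinearMap.ker f).finrank_quotient_add_finrank
    rw [(f.quotKerEquivOfSurjective hf).finrank_eq, Module.finrank_self,
      Module.finrank_fin_fun] at this
    omega
  let p : (Fin (m + 1) → ℤ) →ₗ[ℤ] LinearMap.ker f :=
    (LinearMap.id - f.smulRight u₀).codRestrict _ fun x => by
      change r (x - r x • u₀) = 0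
      rw [map_sub, map_zsmul, hr, smul_eq_mul, mul_one, sub_self]
  have hp : ∀ x, (p x : Fin (m + 1) → ℤ) = x - r x • u₀ := fun x => rfl
  let e := (Module.finBasisOfFinrankEq ℤ _ hK).equivFun
  refine ⟨(e.toLinearMap ∘ₗ p).toAddMonoidHom, fun z => ⟨e.symm z, ?_⟩, ?_⟩
  · have : p (e.symm z) = e.symm z := Subtype.ext <| by
      rw [hp, show r (e.symm z) = 0 from (e.symm z).2, zero_smul, sub_zero]
    simp [this]
  · ext x
    simp only [AddMonoidHom.mem_ker, LinearMap.toAddMonoidHom_coe, LinearMap.coe_comp,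
      Function.comp_apply, LinearEquiv.coe_coe, LinearEquiv.map_eq_zero_iff, mem_zmultiples_iff]
    rw [← Subtype.coe_inj, hp, ZeroMemClass.coe_zero, sub_eq_zero]
    exact ⟨fun h => ⟨r x, h.symm⟩, fun ⟨n, hn⟩ => by rw [← hn, map_zsmul, hr, smul_eq_mul, mul_one]⟩

theorem encard_subgroupsOfIndexAtMost_le (m N : ℕ) :
    (subgroupsOfIndexAtMost (Fin m → ℤ) N).encard ≤ (N ^ m : ℕ) := by
  induction m generalizing N with
  | zero =>
    simpa using encard_le_one_iff_subsingleton.2 Set.subsingleton_of_subsingleton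
  | succ m ih =>
    let e₀ : Fin (m + 1) → ℤ := Pi.single 0 1
    have hr : Pi.evalAddMonoidHom (fun _ => ℤ) 0 e₀ = 1 := by simp [e₀]
    obtain ⟨π, hπ, hker⟩ := exists_surjective_ker_eq_zmultiples hr
    have hcover : subgroupsOfIndexAtMost (Fin (m + 1) → ℤ) N ⊆ ⋃ a ∈ (Finset.Icc 1 N : Set ℕ),
        {L | L ∈ subgroupsOfIndexAtMost _ N ∧ ∀ n : ℤ, n • e₀ ∈ L ↔ (a : ℤ) ∣ n} := by
      intro L hL
      obtain ⟨a, ha⟩ := L.exists_zsmul_mem_iff_dvd e₀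
      have hdvd := dvd_index_of_zsmul_mem_iff ha
      have ha₁ : 1 ≤ a := Nat.pos_of_dvd_of_pos hdvd hL.1
      exact mem_biUnion (Finset.mem_Icc.2 ⟨ha₁, (Nat.le_of_dvd hL.1 hdvd).trans hL.2⟩) ⟨hL, ha⟩
    calc _ ≤ (Finset.Icc 1 N : Set ℕ).encard * (N ^ m : ℕ) :=
          encard_le_encard_mul_of_subset_biUnion hcover fun a ha =>
            encard_setOf_zsmul_mem_iff_dvd_le ih hπ hker hr
              (Int.natCast_ne_zero.2 (Nat.pos_iff_ne_zero.1 (Finset.mem_Icc.1 ha).1)) N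
      _ = (N ^ (m + 1) : ℕ) := by
        rw [encard_coe_eq_coe_finsetCard, Nat.card_Icc, Nat.add_sub_cancel, ← Nat.cast_mul,
          ← pow_succ']

theorem exists_eq_zsmul_of_ne_zero {k : ℕ} {u : Fin k → ℤ} (hu : u ≠ 0) :
    ∃ (c : ℤ) (u₀ : Fin k → ℤ) (r : (Fin k → ℤ) →+ ℤ), c ≠ 0 ∧ u = c • u₀ ∧ r u₀ = 1 := by
  obtain ⟨w, hw⟩ := Finset.univ.gcd_eq_sum_mul u
  set c := Finset.univ.gcd u
  have hc : c ≠ 0 := fun h => hu <| funext fun i => Finset.gcd_eq_zero_iff.1 h i (Finset.mem_univ i)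
  have hu₀ : u = c • fun i => u i / c :=
    funext fun i => (Int.mul_ediv_cancel' (Finset.gcd_dvd (Finset.mem_univ i))).symm
  let r : (Fin k → ℤ) →+ ℤ :=
    AddMonoidHom.mk' (fun x => ∑ i, x i * w i) fun x y => by simp [add_mul, Finset.sum_add_distrib]
  refine ⟨c, _, r, hc, hu₀, mul_left_cancel₀ hc ?_⟩
  rw [← smul_eq_mul, ← map_zsmul, ← hu₀, mul_one, hw]
  rfl

/-- `L ∩ ℚ u = ℤ u`; for `u ∈ L` this says that `u` is a primitive vector of `L`. -/
def IsPrimitiveVector {G : Type*} [AddCommGroup G] (L : AddSubgroup G) (u : G) : Prop :=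
  ∀ x : G, (∃ n : ℤ, n ≠ 0 ∧ n • x ∈ zmultiples u) → (x ∈ L ↔ x ∈ zmultiples u)

section PrimitiveVector

variable {G : Type*} [AddCommGroup G] {u₀ : G} {r : G →+ ℤ} {c : ℤ}

theorem zsmul_mem_zmultiples_zsmul_iff (hr : r u₀ = 1) (n : ℤ) :
    n • u₀ ∈ zmultiples (c • u₀) ↔ c ∣ n := by
  refine ⟨fun ⟨j, hj⟩ => ⟨j, ?_⟩, fun ⟨j, hj⟩ => ⟨j, by rw [hj, mul_comm, mul_smul]⟩⟩
  simpa [hr, mul_comm] using (congrArg r hj).symm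

theorem eq_zsmul_of_zsmul_mem_zmultiples [IsAddTorsionFree G] (hr : r u₀ = 1) {x : G} {n : ℤ}
    (hn : n ≠ 0) (hx : n • x ∈ zmultiples (c • u₀)) : x = r x • u₀ := by
  obtain ⟨j, hj⟩ := hx
  have hrj : j * c = n * r x := by simpa [hr] using congrArg r hj
  refine zsmul_right_injective hn ?_
  simp only [← hj, smul_smul, hrj]

theorem isPrimitiveVector_zsmul_iff [IsAddTorsionFree G] (hr : r u₀ = 1) (hc : c ≠ 0)
    (L : AddSubgroup G) :
    IsPrimitiveVector L (c • u₀) ↔ ∀ n : ℤ, n • u₀ ∈ L ↔ c ∣ n := by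
  refine ⟨fun h n => ?_, fun h x ⟨n, hn, hx⟩ => ?_⟩
  · rw [← zsmul_mem_zmultiples_zsmul_iff hr n]
    exact h _ ⟨c, hc, ⟨n, smul_comm n c u₀⟩⟩
  · rw [eq_zsmul_of_zsmul_mem_zmultiples hr hn hx, h, zsmul_mem_zmultiples_zsmul_iff hr]

end PrimitiveVector

theorem encard_setOf_isPrimitiveVector_le {m : ℕ} {u : Fin (m + 1) → ℤ} (hu : u ≠ 0) (N : ℕ) :
    {L | L ∈ subgroupsOfIndexAtMost _ N ∧ IsPrimitiveVector L u}.encard ≤ (N ^ m : ℕ) := by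
  obtain ⟨c, u₀, r, hc, rfl, hr⟩ := exists_eq_zsmul_of_ne_zero hu
  obtain ⟨π, hπ, hker⟩ := exists_surjective_ker_eq_zmultiples hr
  simp_rw [isPrimitiveVector_zsmul_iff hr hc]
  exact encard_setOf_zsmul_mem_iff_dvd_le (encard_subgroupsOfIndexAtMost_le m) hπ hker hr hc N

noncomputable def euclideanNorm {k : ℕ} (v : Fin k → ℤ) : ℝ := √(∑ i, (v i : ℝ) ^ 2)

theorem abs_le_euclideanNorm {k : ℕ} (v : Fin k → ℤ) (i : Fin k) : |(v i : ℝ)| ≤ euclideanNorm v :=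
  Real.abs_le_sqrt (Finset.single_le_sum (fun j _ => sq_nonneg (v j : ℝ)) (Finset.mem_univ i))

theorem one_le_euclideanNorm {k : ℕ} {v : Fin k → ℤ} (hv : v ≠ 0) : 1 ≤ euclideanNorm v := by
  obtain ⟨i, hi⟩ := Function.ne_iff.1 hv
  exact le_trans (by exact_mod_cast Int.one_le_abs hi) (abs_le_euclideanNorm v i)

theorem euclideanNorm_zsmul {k : ℕ} (a : ℤ) (v : Fin k → ℤ) :
    euclideanNorm (a • v) = |(a : ℝ)| * euclideanNorm v := by
  simp only [euclideanNorm, Pi.smul_apply, smul_eq_mul, Int.cast_mul, mul_pow, ← Finset.mul_sum]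
  rw [Real.sqrt_mul (sq_nonneg _), Real.sqrt_sq_eq_abs]

theorem encard_setOf_euclideanNorm_le (k : ℕ) (R : ℝ) :
    {u : Fin k → ℤ | u ≠ 0 ∧ euclideanNorm u ≤ R}.encard ≤ (⌊3 * R⌋₊ ^ k : ℕ) := by
  rcases lt_or_ge R 1 with hR | hR
  · have : {u : Fin k → ℤ | u ≠ 0 ∧ euclideanNorm u ≤ R} = ∅ :=
      eq_empty_of_forall_notMem fun u ⟨hu, huR⟩ => by linarith [one_le_euclideanNorm hu]
    simp [this]
  set n := ⌊R⌋₊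
  have hbox : {u : Fin k → ℤ | u ≠ 0 ∧ euclideanNorm u ≤ R} ⊆
      ↑(Fintype.piFinset fun _ : Fin k => Finset.Icc (-(n : ℤ)) n) := by
    intro u ⟨_, huR⟩
    refine Finset.mem_coe.2 (Fintype.mem_piFinset.2 fun i => Finset.mem_Icc.2 (abs_le.1 ?_))
    have : (u i).natAbs ≤ n := Nat.le_floor <| by
      rw [Nat.cast_natAbs, Int.cast_abs]; exact (abs_le_euclideanNorm u i).trans huR
    rw [Int.abs_eq_natAbs]
    exact_mod_cast this
  have hn : 2 * n + 1 ≤ ⌊3 * R⌋₊ := by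
    have : 1 ≤ n := Nat.le_floor (by simpa using hR)
    refine Nat.le_floor ?_
    push_cast
    linarith [Nat.floor_le (zero_le_one.trans hR)]
  calc _ ≤ _ := encard_le_encard hbox
    _ = ((2 * n + 1) ^ k : ℕ) := by
      rw [encard_coe_eq_coe_finsetCard, Fintype.card_piFinset, Finset.prod_const, Int.card_Icc,
        Finset.card_univ, Fintype.card_fin]
      congr
      omega
    _ ≤ (⌊3 * R⌋₊ ^ k : ℕ) := by exact_mod_cast Nat.pow_le_pow_left hn k

theorem exists_isPrimitiveVector_euclideanNorm_le {k : ℕ} {L : AddSubgroup (Fin k → ℤ)}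
    {v : Fin k → ℤ} (hvL : v ∈ L) (hv : v ≠ 0) :
    ∃ u ≠ 0, IsPrimitiveVector L u ∧ euclideanNorm u ≤ euclideanNorm v := by
  obtain ⟨d, v₀, r, hd, rfl, hr⟩ := exists_eq_zsmul_of_ne_zero hv
  obtain ⟨a, ha⟩ := L.exists_zsmul_mem_iff_dvd v₀
  have had : (a : ℤ) ∣ d := (ha d).1 hvL
  have ha0 : (a : ℤ) ≠ 0 := fun h => hd (zero_dvd_iff.1 (h ▸ had))
  refine ⟨(a : ℤ) • v₀, fun h => ha0 ?_, (isPrimitiveVector_zsmul_iff hr ha0 L).2 ha, ?_⟩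
  · simpa only [map_zsmul, hr, smul_eq_mul, mul_one, map_zero] using congrArg r h
  have hle : |(a : ℤ)| ≤ |d| := by
    rw [Int.abs_eq_natAbs, Int.abs_eq_natAbs]
    exact_mod_cast Int.natAbs_le_of_dvd_ne_zero had hd
  rw [euclideanNorm_zsmul, euclideanNorm_zsmul]
  exact mul_le_mul_of_nonneg_right (by exact_mod_cast hle) (Real.sqrt_nonneg _)

/-- For every `k > 0` there is a constant `c` such that for all `S ≥ 1` and `T > 0`,
the number of finite-index subgroups `L ⊆ ℤ^k` with `[ℤ^k : L] ≤ T^k` containing a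
nonzero vector of Euclidean length at most `T/S` is at most `c · S^{-k} · T^{k²}`. -/
theorem stmt4 (k : ℕ) (hk : 0 < k) :
    ∃ c : ℝ, ∀ S : ℝ, 1 ≤ S → ∀ T : ℝ, 0 < T →
      ({L : AddSubgroup (Fin k → ℤ) | 0 < L.index ∧ (L.index : ℝ) ≤ T ^ k ∧
          ∃ v ∈ L, v ≠ 0 ∧ Real.sqrt (∑ i, ((v i : ℝ)) ^ 2) ≤ T / S}.ncard : ℝ) ≤
        c * S ^ (-(k : ℤ)) * T ^ (k ^ 2) := by
  obtain ⟨m, rfl⟩ : ∃ m, k = m + 1 := ⟨k - 1, by omega⟩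
  refine ⟨3 ^ (m + 1), fun S hS T hT => ?_⟩
  set N := ⌊T ^ (m + 1)⌋₊
  have hcover : {L : AddSubgroup (Fin (m + 1) → ℤ) | 0 < L.index ∧ (L.index : ℝ) ≤ T ^ (m + 1) ∧
      ∃ v ∈ L, v ≠ 0 ∧ Real.sqrt (∑ i, ((v i : ℝ)) ^ 2) ≤ T / S} ⊆
      ⋃ u ∈ {u : Fin (m + 1) → ℤ | u ≠ 0 ∧ euclideanNorm u ≤ T / S},
        {L | L ∈ subgroupsOfIndexAtMost _ N ∧ IsPrimitiveVector L u} := by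
    rintro L ⟨hpos, hle, v, hvL, hv, hvS⟩
    obtain ⟨u, hu, hprim, huv⟩ := exists_isPrimitiveVector_euclideanNorm_le hvL hv
    exact mem_biUnion ⟨hu, huv.trans hvS⟩ ⟨⟨hpos, Nat.le_floor hle⟩, hprim⟩
  have hcount := (encard_le_encard_mul_of_subset_biUnion hcover fun u hu =>
    encard_setOf_isPrimitiveVector_le hu.1 N).trans
    (mul_le_mul_left (encard_setOf_euclideanNorm_le _ _) _)
  rw [← Nat.cast_mul, encard_le_coe_iff_finite_ncard_le] at hcount
  calc _ ≤ ((⌊3 * (T / S)⌋₊ ^ (m + 1) * N ^ m : ℕ) : ℝ) := by exact_mod_cast hcount.2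
    _ ≤ (3 * (T / S)) ^ (m + 1) * (T ^ (m + 1)) ^ m := by
      push_cast
      gcongr <;> exact Nat.floor_le (by positivity)
    _ = _ := by
      rw [zpow_neg, zpow_natCast, sq, pow_mul, mul_pow, div_pow, pow_succ (T ^ (m + 1))]
      field_simp
end

section
/- For each $k$ and each $S \ge 1$, there exists $R_0$ such that for all $R \ge R_0$, all $T > 0$, and all lattices $L$ of rank $k$ with $\operatorname{covol} L \le T^k$: if every basis $\{v_1,\dots,v_k\}$ of $L$ satisfies $(\sum_i \|v_i\|^2)^{1/2} \ge RT$, then $L$ contains a nonzero vector of length at most $T/S$. -/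
/-!
Suppose every nonzero vector of `L` is longer than `T / S`. Given a proper subspace `W`, take an
orthonormal basis containing a unit vector `e ⊥ W` and the box whose side in the direction `e` is
`t` times its side `T / (S √k)` in the other directions. For `t` of order `(S √k) ^ k` the box has
volume larger than `2 ^ k covol L`, so by Minkowski it contains a nonzero lattice vector, which
has length `O(T)`; it cannot lie in `W`, where the box only contains vectors of length
`≤ T / S`.

With such vectors at hand, a basis of `L` is built one vector at a time: the next vector is a
lattice vector at minimal distance from the span `W` of the previous ones, and reducing it modulo
the previous ones keeps its length within the sum of the previous lengths plus `O(T)`.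
Minimality makes the family primitive (`L ∩ span ℝ = span ℤ`), since rounding the
coefficient of the new vector produces a lattice vector that is strictly closer to `W`. The
resulting basis has total length `O(2 ^ k T)`, which is below `RT` for large `R`.
-/

open Submodule Set Module MeasureTheory

variable {E : Type*} [NormedAddCommGroup E] [InnerProductSpace ℝ E]

theorem OrthonormalBasis.norm_sq_le_card_mul_sq {κ : Type*} [Fintype κ]
    (ob : OrthonormalBasis κ ℝ E) {x : E} {a : ℝ} (h : ∀ i, |ob.repr x i| ≤ a) : ‖x‖ ^ 2 ≤ Fintype.card κ * a ^ 2 := by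
  rw [← ob.repr.norm_map, EuclideanSpace.real_norm_sq_eq, ← nsmul_eq_mul, ← Finset.card_univ,
    ← Finset.sum_const]
  exact Finset.sum_le_sum fun i _ => sq_abs (ob.repr x i) ▸ pow_le_pow_left₀ (abs_nonneg _) (h i) 2

variable [FiniteDimensional ℝ E]

theorem starProjection_orthogonal_eq_zero_iff {W : Submodule ℝ E} {x : E} :
    Wᗮ.starProjection x = 0 ↔ x ∈ W := by
  rw [starProjection_apply_eq_zero_iff, orthogonal_orthogonal]

def IsPrimitiveIn (s : Set E) (L : Submodule ℤ E) : Prop :=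
  ∀ x ∈ L, x ∈ span ℝ s → x ∈ span ℤ s

theorem exists_mem_span_int_norm_sub_le {ι : Type*} [Fintype ι] (c : ι → E) (x : E) :
    ∃ z ∈ span ℤ (range c),
      ‖x - z‖ ≤ ‖(span ℝ (range c))ᗮ.starProjection x‖ + ∑ i, ‖c i‖ := by
  set W := span ℝ (range c)
  obtain ⟨a, ha⟩ := (mem_span_range_iff_exists_fun ℝ).mp (W.starProjection_apply_mem x)
  refine ⟨∑ i, ⌊a i⌋ • c i, sum_mem fun i _ => zsmul_mem (subset_span (mem_range_self i)) _, ?_⟩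
  have hsplit : x - ∑ i, ⌊a i⌋ • c i = Wᗮ.starProjection x + ∑ i, Int.fract (a i) • c i := by
    conv_lhs => rw [← W.starProjection_add_starProjection_orthogonal x, ← ha]
    simp only [Int.fract, sub_smul, Finset.sum_sub_distrib, Int.cast_smul_eq_zsmul]
    abel
  have hfract : ‖∑ i, Int.fract (a i) • c i‖ ≤ ∑ i, ‖c i‖ := by
    refine (norm_sum_le _ _).trans (Finset.sum_le_sum fun i _ => ?_)
    rw [norm_smul, Real.norm_of_nonneg (Int.fract_nonneg _)]
    exact mul_le_of_le_one_left (norm_nonneg _) (Int.fract_lt_one _).le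
  rw [hsplit]
  exact (norm_add_le _ _).trans (by linarith)

theorem exists_mem_notMem_forall_norm_starProjection_le (L : Submodule ℤ E) [DiscreteTopology L]
    {ι : Type*} [Fintype ι] {c : ι → E} (hc : ∀ i, c i ∈ L) {u : E} (hu : u ∈ L)
    (huc : u ∉ span ℝ (range c)) :
    ∃ b ∈ L, b ∉ span ℝ (range c) ∧ ‖b‖ ≤ ‖u‖ + ∑ i, ‖c i‖ ∧
      ∀ x ∈ L, x ∉ span ℝ (range c) →
        ‖(span ℝ (range c))ᗮ.starProjection b‖ ≤ ‖(span ℝ (range c))ᗮ.starProjection x‖ := by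
  set W := span ℝ (range c)
  set N := ‖u‖ + ∑ i, ‖c i‖
  -- reducing modulo the lattice spanned by `c` keeps the component orthogonal to `W`
  have reduce : ∀ x ∈ L, ∃ y ∈ L, Wᗮ.starProjection y = Wᗮ.starProjection x ∧
      ‖y‖ ≤ ‖Wᗮ.starProjection x‖ + ∑ i, ‖c i‖ := by
    intro x hx
    obtain ⟨z, hz, hxz⟩ := exists_mem_span_int_norm_sub_le c x
    have hzL : z ∈ L := span_le.mpr (range_subset_iff.mpr hc) hz
    have hzW : z ∈ W := span_le_restrictScalars ℤ ℝ _ hz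
    refine ⟨x - z, sub_mem hx hzL, ?_, hxz⟩
    rw [map_sub, starProjection_orthogonal_eq_zero_iff.mpr hzW, sub_zero]
  set A := {y | y ∈ L ∧ ‖y‖ ≤ N ∧ y ∉ W}
  have hA : A.Finite := by
    refine (Metric.finite_isBounded_inter_isClosed (K := Metric.closedBall 0 N)
      DiscreteTopology.isDiscrete Metric.isBounded_closedBall
      (AddSubgroup.isClosed_of_discrete (H := L.toAddSubgroup))).subset ?_
    rintro y ⟨hyL, hyN, -⟩
    exact ⟨mem_closedBall_zero_iff.mpr hyN, hyL⟩
  obtain ⟨u', hu'L, hu'Q, hu'N⟩ := reduce u hu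
  have hQu : ‖Wᗮ.starProjection u‖ ≤ ‖u‖ := Wᗮ.norm_starProjection_apply_le u
  have hu'A : u' ∈ A := ⟨hu'L, by linarith, by
    rwa [← starProjection_orthogonal_eq_zero_iff, hu'Q, starProjection_orthogonal_eq_zero_iff]⟩
  obtain ⟨b, ⟨hbL, hbN, hbW⟩, hbmin⟩ :=
    A.exists_min_image (fun y => ‖Wᗮ.starProjection y‖) hA ⟨u', hu'A⟩
  refine ⟨b, hbL, hbW, hbN, fun x hxL hxW => ?_⟩
  by_contra! hlt
  obtain ⟨y, hyL, hyQ, hyN⟩ := reduce x hxL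
  have hbu : ‖Wᗮ.starProjection b‖ ≤ ‖Wᗮ.starProjection u‖ := hu'Q ▸ hbmin u' hu'A
  have hyA : y ∈ A := ⟨hyL, by linarith, by
    rwa [← starProjection_orthogonal_eq_zero_iff, hyQ, starProjection_orthogonal_eq_zero_iff]⟩
  exact (hyQ ▸ hbmin y hyA).not_gt hlt

theorem IsPrimitiveIn.insert {L : Submodule ℤ E} {s : Set E} (hs : IsPrimitiveIn s L) {b : E}
    (hbL : b ∈ L) (hbs : b ∉ span ℝ s)
    (hmin : ∀ x ∈ L, x ∉ span ℝ s →
      ‖(span ℝ s)ᗮ.starProjection b‖ ≤ ‖(span ℝ s)ᗮ.starProjection x‖) :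
    IsPrimitiveIn (insert b s) L := by
  set Q := (span ℝ s)ᗮ.starProjection
  intro x hxL hx
  obtain ⟨t, z, hz, rfl⟩ := mem_span_insert.mp hx
  set y := t • b + z - round t • b
  have hyL : y ∈ L := sub_mem hxL (zsmul_mem hbL _)
  have hQy : Q y = (t - round t) • Q b := by
    simp only [y, Q, map_sub, map_add, map_smul, starProjection_orthogonal_eq_zero_iff.mpr hz,
      ← Int.cast_smul_eq_zsmul ℝ, sub_smul]
    abel
  -- `y` is closer to `span ℝ s` than `b`, so by minimality it lies in `span ℝ s`
  have hyW : y ∈ span ℝ s := by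
    by_contra hyW
    have hQb : 0 < ‖Q b‖ := norm_pos_iff.mpr (mt starProjection_orthogonal_eq_zero_iff.mp hbs)
    have := hmin y hyL hyW
    rw [hQy, norm_smul, Real.norm_eq_abs] at this
    nlinarith [abs_sub_round t]
  have hxy : t • b + z = y + round t • b := by simp only [y]; abel
  rw [hxy]
  exact add_mem (span_mono (subset_insert _ _) (hs y hyL hyW))
    (zsmul_mem (subset_span (mem_insert _ _)) _)

theorem exists_linearIndependent_isPrimitiveIn {L : Submodule ℤ E} [DiscreteTopology L] {M : ℝ}
    (hM : ∀ W : Submodule ℝ E, W ≠ ⊤ → ∃ u ∈ L, u ∉ W ∧ ‖u‖ ≤ M) :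
    ∀ j ≤ finrank ℝ E, ∃ c : Fin j → E, (∀ i, c i ∈ L) ∧ LinearIndependent ℝ c ∧
      IsPrimitiveIn (range c) L ∧ ∑ i, ‖c i‖ ≤ (2 ^ j - 1) * M := by
  intro j
  induction j with
  | zero =>
    intro _
    refine ⟨Fin.elim0, fun i => i.elim0, linearIndependent_empty_type, fun x _ hx => ?_, by simp⟩
    rw [range_eq_empty, span_empty, mem_bot] at hx ⊢
    exact hx
  | succ j ih =>
    intro hj
    obtain ⟨c, hcL, hc, hprim, hsum⟩ := ih (by omega)
    have hW : span ℝ (range c) ≠ ⊤ := by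
      intro htop
      have := finrank_range_le_card (R := ℝ) c
      rw [Set.finrank, htop, finrank_top, Fintype.card_fin] at this
      omega
    obtain ⟨u, huL, huW, huM⟩ := hM _ hW
    obtain ⟨b, hbL, hbW, hbnorm, hbmin⟩ :=
      exists_mem_notMem_forall_norm_starProjection_le L hcL huL huW
    refine ⟨Fin.snoc c b, Fin.lastCases (by simpa) (by simpa),
      linearIndependent_finSnoc.mpr ⟨hc, hbW⟩, by simpa using hprim.insert hbL hbW hbmin, ?_⟩
    rw [Fin.sum_univ_castSucc]
    simp only [Fin.snoc_castSucc, Fin.snoc_last, pow_succ]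
    linarith

theorem exists_span_int_eq_sum_norm_le {L : Submodule ℤ E} [DiscreteTopology L] {M : ℝ} {n : ℕ}
    (hn : finrank ℝ E = n)
    (hM : ∀ W : Submodule ℝ E, W ≠ ⊤ → ∃ u ∈ L, u ∉ W ∧ ‖u‖ ≤ M) :
    ∃ c : Fin n → E, span ℤ (range c) = L ∧ ∑ i, ‖c i‖ ≤ (2 ^ n - 1) * M := by
  obtain ⟨c, hcL, hc, hprim, hsum⟩ := exists_linearIndependent_isPrimitiveIn hM n hn.ge
  refine ⟨c, le_antisymm (span_le.mpr (range_subset_iff.mpr hcL)) fun x hx => hprim x hx ?_, hsum⟩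
  rw [hc.span_eq_top_of_card_eq_finrank' ((Fintype.card_fin _).trans hn.symm)]
  trivial

section Volume

variable [MeasurableSpace E] [BorelSpace E]

theorem exists_ne_zero_mem_span_int_forall_abs_repr_le {ι κ : Type*} [Fintype ι] [Fintype κ]
    (b : Basis ι ℝ E) (ob : OrthonormalBasis κ ℝ E) {r : κ → ℝ} (hr : ∀ i, 0 ≤ r i)
    (hvol : volume (ZSpan.fundamentalDomain b) < ENNReal.ofReal (∏ i, r i)) :
    ∃ x ∈ span ℤ (range b), x ≠ 0 ∧ ∀ i, |ob.repr x i| ≤ r i := by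
  let f : E →ₗ[ℝ] κ → ℝ := (WithLp.linearEquiv 2 ℝ (κ → ℝ)).toLinearMap ∘ₗ ob.repr.toLinearMap
  have hf : MeasurePreserving f := (PiLp.volume_preserving_ofLp κ).comp ob.measurePreserving_repr
  set K := f ⁻¹' Icc (-r) r
  have hK : ∀ x, x ∈ K ↔ ∀ i, |ob.repr x i| ≤ r i := fun x => by
    simp [K, f, Pi.le_def, abs_le, forall_and]
  have hsymm : ∀ x ∈ K, -x ∈ K := fun x hx => by
    rw [hK] at hx ⊢
    simpa using hx
  have hvolK : volume K = ENNReal.ofReal (∏ i, r i) * 2 ^ finrank ℝ E := by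
    rw [hf.measure_preimage measurableSet_Icc.nullMeasurableSet, Real.volume_Icc_pi,
      finrank_eq_card_basis ob.toBasis, ENNReal.ofReal_prod_of_nonneg fun i _ => hr i,
      ← Finset.card_univ, ← Finset.prod_const, ← Finset.prod_mul_distrib]
    refine Finset.prod_congr rfl fun i _ => ?_
    rw [Pi.neg_apply, sub_neg_eq_add, ← two_mul, ENNReal.ofReal_mul zero_le_two, mul_comm]
    simp
  have : Countable (span ℤ (range b)).toAddSubgroup := inferInstanceAs (Countable (span ℤ _))
  obtain ⟨x, hx0, hxK⟩ := exists_ne_zero_mem_lattice_of_measure_mul_two_pow_lt_measure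
    (L := (span ℤ (range b)).toAddSubgroup) (ZSpan.isAddFundamentalDomain b volume) hsymm
    ((convex_Icc _ _).linear_preimage f)
    (hvolK ▸ (ENNReal.mul_lt_mul_iff_left (by simp) (by simp)).mpr hvol)
  exact ⟨x, x.2, by simpa using hx0, (hK x).mp hxK⟩

theorem exists_mem_span_int_notMem_norm_le {ι : Type*} [Fintype ι] (b : Basis ι ℝ E)
    {r t : ℝ} (hr : 0 ≤ r) (ht : 1 ≤ t) (hshort : ∀ x ∈ span ℤ (range b), x ≠ 0 → r < ‖x‖)
    (hvol : volume (ZSpan.fundamentalDomain b) <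
      ENNReal.ofReal (t * (r / √(finrank ℝ E)) ^ finrank ℝ E))
    {W : Submodule ℝ E} (hW : W ≠ ⊤) :
    ∃ u ∈ span ℤ (range b), u ∉ W ∧ ‖u‖ ≤ t * r := by
  classical
  set n := finrank ℝ E
  set a := r / √n
  obtain ⟨v, hvW, hv0⟩ := exists_mem_ne_zero_of_ne_bot (mt orthogonal_eq_bot_iff.mp hW)
  have : Nontrivial E := ⟨⟨v, 0, hv0⟩⟩
  have hn : 0 < n := finrank_pos
  have hna : (n : ℝ) * a ^ 2 = r ^ 2 := by
    rw [div_pow, Real.sq_sqrt n.cast_nonneg, mul_div_cancel₀ _ (by positivity)]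
  have ha : 0 ≤ a := by positivity
  set e := ‖v‖⁻¹ • v
  have heW : e ∈ Wᗮ := smul_mem _ _ hvW
  have he1 : ‖e‖ = 1 := norm_smul_inv_norm hv0
  have he : Orthonormal ℝ ((↑) : ({e} : Set E) → E) :=
    orthonormal_subtype_iff_ite.mpr <| by
      rintro _ rfl _ rfl
      simp [he1]
  obtain ⟨s, ob, hes, hob⟩ := he.exists_orthonormalBasis_extension
  have hcard : Fintype.card s = n := (finrank_eq_card_basis ob.toBasis).symm
  set i₀ : s := ⟨e, hes rfl⟩
  have hrepr : ∀ x i, ob.repr x i = inner ℝ (i : E) x := fun x i => by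
    rw [ob.repr_apply_apply, hob]
  obtain ⟨x, hxL, hx0, hx⟩ := exists_ne_zero_mem_span_int_forall_abs_repr_le b ob
    (r := fun i => a * if i = i₀ then t else 1) (fun i => by positivity) (by
      rw [Finset.prod_mul_distrib, Finset.prod_const, Fintype.prod_ite_eq', mul_comm]
      convert hvol
      exact Finset.card_univ.trans hcard)
  have hxW : x ∉ W := by
    intro hxW
    have hcoord : ∀ i, |ob.repr x i| ≤ a := fun i => by
      by_cases hi : i = i₀
      · rw [hi, hrepr, inner_left_of_mem_orthogonal hxW heW, abs_zero]
        exact ha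
      · simpa [hi] using hx i
    have := ob.norm_sq_le_card_mul_sq hcoord
    rw [hcard, hna] at this
    exact (hshort x hxL hx0).not_ge (pow_le_pow_iff_left₀ (norm_nonneg _) hr two_ne_zero |>.mp this)
  refine ⟨x, hxL, hxW, ?_⟩
  have hcoord : ∀ i, |ob.repr x i| ≤ t * a := fun i => (hx i).trans <| by
    split_ifs <;> nlinarith
  have := ob.norm_sq_le_card_mul_sq hcoord
  rw [hcard, mul_pow, mul_left_comm, hna, ← mul_pow] at this
  exact pow_le_pow_iff_left₀ (norm_nonneg _) (by positivity) two_ne_zero |>.mp this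

theorem exists_mem_span_int_notMem_norm_le_of_volume_le {ι : Type*} [Fintype ι]
    (b : Basis ι ℝ E) {S T : ℝ} (hS : 1 ≤ S) (hT : 0 < T)
    (hshort : ∀ x ∈ span ℤ (range b), x ≠ 0 → T / S < ‖x‖)
    (hvol : volume (ZSpan.fundamentalDomain b) ≤ ENNReal.ofReal (T ^ finrank ℝ E))
    {W : Submodule ℝ E} (hW : W ≠ ⊤) :
    ∃ u ∈ span ℤ (range b), u ∉ W ∧
      ‖u‖ ≤ 2 * (S * √(finrank ℝ E)) ^ finrank ℝ E * (T / S) := by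
  set n := finrank ℝ E
  have hn : 1 ≤ √n :=
    Real.one_le_sqrt.mpr (Nat.one_le_cast.mpr ((Nat.zero_le _).trans_lt (finrank_lt hW)))
  have hSn : 1 ≤ S * √n := one_le_mul_of_one_le_of_one_le hS hn
  refine exists_mem_span_int_notMem_norm_le b (by positivity)
    (by linarith [one_le_pow₀ (n := n) hSn]) hshort (hvol.trans_lt ?_) hW
  have : √n ≠ 0 := by positivity
  rw [ENNReal.ofReal_lt_ofReal_iff (by positivity), mul_assoc, ← mul_pow,
    show S * √n * (T / S / √n) = T by field_simp]
  linarith [pow_pos hT n]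

end Volume

theorem EuclideanSpace.volume_fundamentalDomain {ι : Type*} [Fintype ι] [DecidableEq ι]
    (b : Basis ι ℝ (EuclideanSpace ℝ ι)) :
    volume (ZSpan.fundamentalDomain b) = ENNReal.ofReal |(Matrix.of fun i j => b j i).det| := by
  rw [ZSpan.measure_fundamentalDomain b volume (EuclideanSpace.basisFun ι ℝ).toBasis,
    measure_congr (ZSpan.fundamentalDomain_ae_parallelepiped _ _), OrthonormalBasis.coe_toBasis,
    OrthonormalBasis.volume_parallelepiped, mul_one, Basis.det_apply]
  rfl

/-- For each `k` and each `S ≥ 1` there is `R₀` such that for all `R ≥ R₀`, all `T > 0`,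
and every lattice `L ⊆ ℝ^k` of rank `k` (the ℤ-span of an ℝ-basis `B`) with covolume
`|det B| ≤ T^k`: if every ℤ-basis `C` of `L` satisfies `(∑ ‖Cᵢ‖²)^{1/2} ≥ RT`, then `L`
contains a nonzero vector of length at most `T/S`. -/
theorem stmt7 (k : ℕ) (S : ℝ) (hS : 1 ≤ S) :
    ∃ R₀ : ℝ, ∀ R : ℝ, R₀ ≤ R → ∀ T : ℝ, 0 < T →
      ∀ B : Fin k → EuclideanSpace ℝ (Fin k), LinearIndependent ℝ B →
        |(Matrix.of fun i j => B j i).det| ≤ T ^ k →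
        (∀ C : Fin k → EuclideanSpace ℝ (Fin k),
            Submodule.span ℤ (Set.range C) = Submodule.span ℤ (Set.range B) →
            R * T ≤ Real.sqrt (∑ i, ‖C i‖ ^ 2)) →
        ∃ x ∈ Submodule.span ℤ (Set.range B), x ≠ 0 ∧ ‖x‖ ≤ T / S := by
  set M := 2 * (S * √k) ^ k
  refine ⟨2 ^ k * M + 1, fun R hR T hT B hB hdet hbasis => ?_⟩
  by_contra! hshort
  let b := Basis.mk hB (hB.span_eq_top_of_card_eq_finrank' (by simp)).ge
  have hb : ⇑b = B := Basis.coe_mk _ _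
  rw [← hb] at hshort hbasis hdet
  obtain ⟨c, hc, hsum⟩ := exists_span_int_eq_sum_norm_le finrank_euclideanSpace_fin fun W hW =>
    exists_mem_span_int_notMem_norm_le_of_volume_le b hS hT hshort (by
      rw [EuclideanSpace.volume_fundamentalDomain, finrank_euclideanSpace_fin]
      exact ENNReal.ofReal_le_ofReal hdet) hW
  rw [finrank_euclideanSpace_fin] at hsum
  have hnorm : √(∑ i, ‖c i‖ ^ 2) ≤ ∑ i, ‖c i‖ := Real.sqrt_le_iff.mpr
    ⟨by positivity, Finset.sum_sq_le_sq_sum_of_nonneg fun i _ => norm_nonneg _⟩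
  have hTS : T / S ≤ T := div_le_self hT.le (by linarith)
  have : R * T < R * T := calc
    R * T ≤ ∑ i, ‖c i‖ := (hbasis c hc).trans hnorm
    _ ≤ (2 ^ k - 1) * (M * (T / S)) := hsum
    _ ≤ 2 ^ k * (M * T) := by gcongr; linarith
    _ < (2 ^ k * M + 1) * T := by linarith
    _ ≤ R * T := by gcongr
  exact this.false
end

section
/- If $L$ is a lattice of rank $k$ obtained by the greedy basis construction—$v_1$ a shortest nonzero vector, and inductively $v_i$ a shortest lift of a shortest construction in successive quotients—then setting $\alpha_i = \operatorname{covol}(L_i/L_{i-1})$ where $L_i = \mathbb{Z}v_1 + \cdots + \mathbb{Z}v_i$, one has $\alpha_i \ge \frac{\sqrt{3}}{2}\,\alpha_{i-1}$ for all $2 \le i \le k$, and $\|v_i\|^2 \le \alpha_i^2 + \frac{1}{4}(\alpha_1^2+\cdots+\alpha_{i-1}^2)$. -/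
/-- Orthogonal projection onto the orthogonal complement of the span of `v j` for `j < i`;
this computes the image of a vector in the metrized quotient `L/L_{i-1}`. -/
noncomputable def quotProj (k : ℕ) (v : Fin k → EuclideanSpace ℝ (Fin k)) (i : ℕ)
    (x : EuclideanSpace ℝ (Fin k)) : EuclideanSpace ℝ (Fin k) :=
  (Submodule.orthogonalProjection ((Submodule.span ℝ (v '' {j | (j : ℕ) < i}))ᗮ) x :
    EuclideanSpace ℝ (Fin k))

/-- `αᵢ = covol(Lᵢ/Lᵢ₋₁)`, the length of the image of `vᵢ` in the quotient `L/Lᵢ₋₁`. -/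
noncomputable def alphaCovol (k : ℕ) (v : Fin k → EuclideanSpace ℝ (Fin k)) (i : Fin k) : ℝ :=
  ‖quotProj k v i (v i)‖

/-!
Write `πₙ` (`projBelow v n` below) for the orthogonal projection onto the complement of
`span ℝ {vⱼ | j < n}`, so that `αᵢ = ‖πᵢ vᵢ‖`. Every vector `w` of that span can be translated
by an integral combination of the `vⱼ`, `j < n`, so that each of its Gram–Schmidt coordinates
lies in `[-1/2, 1/2]` (Babai's nearest plane), whence `‖w + u‖² ≤ ¼ ∑_{j<n} αⱼ²`. Applied to
`vᵢ - πᵢ vᵢ`, the minimality of the lift `vᵢ` gives the bound on `‖vᵢ‖²`. For the first bound,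
reduce `v_{j+1}` by the nearest integer multiple of `vⱼ`: the result lies in `L` and its image
in `L/Lⱼ` has squared length `α_{j+1}² + t² αⱼ²` with `|t| ≤ 1/2`, which is at least `αⱼ²` by
the choice of `vⱼ`.
-/

open Submodule Finset

lemma sq_sub_round_le (c : ℝ) : (c - round c) ^ 2 ≤ 1 / 4 := by
  have h := abs_sub_round c
  calc (c - round c) ^ 2 = |c - round c| ^ 2 := (sq_abs _).symm
    _ ≤ (1 / 2) ^ 2 := pow_le_pow_left₀ (abs_nonneg _) h 2
    _ = 1 / 4 := by norm_num

lemma sqrt_three_div_two_mul_le_of_sq_le {a b t : ℝ} (hb : 0 ≤ b) (ht : t ^ 2 ≤ 1 / 4)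
    (h : a ^ 2 ≤ b ^ 2 + t ^ 2 * a ^ 2) : √3 / 2 * a ≤ b := by
  refine (abs_le_of_sq_le_sq' ?_ hb).2
  rw [mul_pow, div_pow, Real.sq_sqrt zero_le_three]
  nlinarith [mul_le_mul_of_nonneg_right ht (sq_nonneg a)]

namespace Submodule

variable {E : Type*} [NormedAddCommGroup E] [InnerProductSpace ℝ E] {K : Submodule ℝ E}

lemma norm_add_sq_of_mem_orthogonal {a b : E} (ha : a ∈ Kᗮ) (hb : b ∈ K) :
    ‖a + b‖ ^ 2 = ‖a‖ ^ 2 + ‖b‖ ^ 2 := by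
  rw [norm_add_sq_real, inner_left_of_mem_orthogonal hb ha]
  ring

lemma sub_starProjection_orthogonal_mem [K.HasOrthogonalProjection] (x : E) :
    x - Kᗮ.starProjection x ∈ K := by
  rw [starProjection_orthogonal_val, sub_sub_cancel]
  exact K.starProjection_apply_mem x

lemma starProjection_orthogonal_eq_of_sub_mem [Kᗮ.HasOrthogonalProjection] {x y : E}
    (hy : y ∈ Kᗮ) (hxy : x - y ∈ K) : Kᗮ.starProjection x = y :=
  eq_starProjection_of_mem_orthogonal hy (K.le_orthogonal_orthogonal hxy)

/-- One step of Babai's nearest plane algorithm: `m` is the integer nearest to the coordinate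
of `w` along `b`. -/
lemma exists_sub_zsmul_sub_smul_starProjection_mem [K.HasOrthogonalProjection] (b : E) {w : E}
    (hw : w ∈ (ℝ ∙ b) ⊔ K) :
    ∃ m : ℤ, ∃ t : ℝ, t ^ 2 ≤ 1 / 4 ∧ w - m • b - t • Kᗮ.starProjection b ∈ K := by
  obtain ⟨y, hy, z, hz, rfl⟩ := mem_sup.mp hw
  obtain ⟨c, rfl⟩ := mem_span_singleton.mp hy
  refine ⟨round c, c - round c, sq_sub_round_le c, ?_⟩
  have hdecomp : c • b + z - round c • b - (c - round c) • Kᗮ.starProjection b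
      = z + (c - round c) • (b - Kᗮ.starProjection b) := by
    rw [← Int.cast_smul_eq_zsmul ℝ]
    module
  rw [hdecomp]
  exact add_mem hz (smul_mem _ _ (sub_starProjection_orthogonal_mem b))

end Submodule

section SpanBelow

variable {E : Type*} [NormedAddCommGroup E] [InnerProductSpace ℝ E] {k : ℕ} (v : Fin k → E)

/-- `Lₙ ⊗ ℝ`. -/
def spanBelow (n : ℕ) : Submodule ℝ E := span ℝ (v '' {j | (j : ℕ) < n})

instance (n : ℕ) : FiniteDimensional ℝ (spanBelow v n) :=
  FiniteDimensional.span_of_finite ℝ (Set.toFinite _)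

/-- Models the quotient map `L → L/Lₙ`. -/
noncomputable def projBelow (n : ℕ) : E →L[ℝ] E := (spanBelow v n)ᗮ.starProjection

variable {v}

lemma setOf_val_lt_succ {n : ℕ} (hn : n < k) :
    {j : Fin k | (j : ℕ) < n + 1} = insert ⟨n, hn⟩ {j : Fin k | (j : ℕ) < n} := by
  ext j
  simp [Fin.ext_iff]
  omega

lemma filter_val_lt_succ {n : ℕ} (hn : n < k) :
    univ.filter (fun j : Fin k => (j : ℕ) < n + 1)
      = insert ⟨n, hn⟩ (univ.filter (fun j : Fin k => (j : ℕ) < n)) := by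
  ext j
  simp [Fin.ext_iff]
  omega

lemma spanBelow_succ {n : ℕ} (hn : n < k) :
    spanBelow v (n + 1) = (ℝ ∙ v ⟨n, hn⟩) ⊔ spanBelow v n := by
  rw [spanBelow, setOf_val_lt_succ hn, Set.image_insert_eq, span_insert, spanBelow]

lemma spanBelow_mono : Monotone (spanBelow v) := fun _ _ h =>
  span_mono (Set.image_mono fun _ hj => lt_of_lt_of_le hj h)

lemma apply_mem_spanBelow {j : Fin k} {n : ℕ} (h : (j : ℕ) < n) : v j ∈ spanBelow v n :=
  subset_span ⟨j, h, rfl⟩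

lemma projBelow_mem (n : ℕ) (x : E) : projBelow v n x ∈ (spanBelow v n)ᗮ :=
  starProjection_apply_mem _ x

lemma sub_projBelow_mem (n : ℕ) (x : E) : x - projBelow v n x ∈ spanBelow v n :=
  sub_starProjection_orthogonal_mem x

lemma projBelow_apply_self_ne_zero (hv : LinearIndependent ℝ v) (i : Fin k) :
    projBelow v i (v i) ≠ 0 := by
  rw [projBelow, Ne, starProjection_apply_eq_zero_iff, orthogonal_orthogonal]
  exact hv.notMem_span_image (by simp)

lemma projBelow_apply_self_mem_spanBelow_succ (j : Fin k) :
    projBelow v j (v j) ∈ spanBelow v (j + 1) := by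
  have hsub := spanBelow_mono (Nat.le_succ j) (sub_projBelow_mem (v := v) j (v j))
  simpa using sub_mem (apply_mem_spanBelow (Nat.lt_succ_self j)) hsub

theorem exists_mem_zspan_norm_add_sq_le {n : ℕ} (hn : n ≤ k) {w : E} (hw : w ∈ spanBelow v n) :
    ∃ u ∈ span ℤ (v '' {j | (j : ℕ) < n}), ‖w + u‖ ^ 2 ≤
      1 / 4 * ∑ j ∈ univ.filter (fun j : Fin k => (j : ℕ) < n), ‖projBelow v j (v j)‖ ^ 2 := by
  induction n generalizing w with
  | zero =>
    have hw0 : w = 0 := by simpa [spanBelow] using hw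
    exact ⟨0, zero_mem _, by simp [hw0]⟩
  | succ n ih =>
    have hnk : n < k := hn
    set b := v ⟨n, hnk⟩
    rw [spanBelow_succ hnk] at hw
    obtain ⟨m, t, ht, hred⟩ : ∃ m : ℤ, ∃ t : ℝ, t ^ 2 ≤ 1 / 4 ∧
        w - m • b - t • projBelow v n b ∈ spanBelow v n :=
      exists_sub_zsmul_sub_smul_starProjection_mem b hw
    obtain ⟨u, hu, hle⟩ := ih hnk.le hred
    refine ⟨u - m • b, ?_, ?_⟩
    · rw [setOf_val_lt_succ hnk, Set.image_insert_eq]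
      exact sub_mem (span_mono (Set.subset_insert _ _) hu)
        (zsmul_mem (subset_span (Set.mem_insert _ _)) m)
    · have hsplit : w + (u - m • b) = t • projBelow v n b
          + (w - m • b - t • projBelow v n b + u) := by
        abel
      have hu' : u ∈ spanBelow v n := span_le_restrictScalars ℤ ℝ _ hu
      rw [hsplit, norm_add_sq_of_mem_orthogonal (smul_mem _ _ (projBelow_mem n b))
        (add_mem hred hu'), filter_val_lt_succ hnk, sum_insert (by simp), norm_smul,
        mul_pow, Real.norm_eq_abs, sq_abs]
      nlinarith [mul_le_mul_of_nonneg_right ht (sq_nonneg ‖projBelow v n b‖)]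

theorem norm_sq_le_of_forall_norm_le_norm_add (i : Fin k)
    (hmin : ∀ u ∈ span ℤ (v '' {j | j < i}), ‖v i‖ ≤ ‖v i + u‖) :
    ‖v i‖ ^ 2 ≤ ‖projBelow v i (v i)‖ ^ 2 +
      1 / 4 * ∑ j ∈ univ.filter (fun j => j < i), ‖projBelow v j (v j)‖ ^ 2 := by
  obtain ⟨u, hu, hle⟩ :=
    exists_mem_zspan_norm_add_sq_le i.isLt.le (sub_projBelow_mem (v := v) i (v i))
  have hu' : u ∈ spanBelow v i := span_le_restrictScalars ℤ ℝ _ hu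
  calc ‖v i‖ ^ 2 ≤ ‖v i + u‖ ^ 2 := pow_le_pow_left₀ (norm_nonneg _) (hmin u hu) 2
    _ = ‖projBelow v i (v i) + (v i - projBelow v i (v i) + u)‖ ^ 2 := by
      abel_nf
    _ = ‖projBelow v i (v i)‖ ^ 2 + ‖v i - projBelow v i (v i) + u‖ ^ 2 :=
      norm_add_sq_of_mem_orthogonal (projBelow_mem _ _) (add_mem (sub_projBelow_mem _ _) hu')
    _ ≤ _ := add_le_add_right hle _

theorem sqrt_three_div_two_mul_norm_projBelow_le (hv : LinearIndependent ℝ v) {i j : Fin k}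
    (hji : (j : ℕ) + 1 = i)
    (hmin : ∀ x ∈ span ℤ (Set.range v),
      projBelow v j x ≠ 0 → ‖projBelow v j (v j)‖ ≤ ‖projBelow v j x‖) :
    √3 / 2 * ‖projBelow v j (v j)‖ ≤ ‖projBelow v i (v i)‖ := by
  set a := projBelow v i (v i)
  set p := projBelow v j (v j)
  have hKi : spanBelow v i = (ℝ ∙ v j) ⊔ spanBelow v j := by
    rw [← hji, spanBelow_succ]
  obtain ⟨m, t, ht, hred⟩ : ∃ m : ℤ, ∃ t : ℝ, t ^ 2 ≤ 1 / 4 ∧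
      v i - a - m • v j - t • p ∈ spanBelow v j :=
    exists_sub_zsmul_sub_smul_starProjection_mem (v j) (hKi ▸ sub_projBelow_mem _ _)
  have ha : a ∈ (spanBelow v j)ᗮ :=
    orthogonal_le (spanBelow_mono (hji ▸ Nat.le_succ j)) (projBelow_mem _ _)
  have hproj : projBelow v j (v i - m • v j) = a + t • p :=
    starProjection_orthogonal_eq_of_sub_mem (add_mem ha (smul_mem _ _ (projBelow_mem _ _)))
      (by convert hred using 1; abel)
  have hnorm : ‖a + t • p‖ ^ 2 = ‖a‖ ^ 2 + t ^ 2 * ‖p‖ ^ 2 := by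
    rw [norm_add_sq_of_mem_orthogonal (projBelow_mem _ _)
      (smul_mem _ _ (hji ▸ projBelow_apply_self_mem_spanBelow_succ j)), norm_smul, mul_pow,
      Real.norm_eq_abs, sq_abs]
  have ha0 : 0 < ‖a‖ := norm_pos_iff.mpr (projBelow_apply_self_ne_zero hv i)
  have hne : a + t • p ≠ 0 := by
    intro h0
    rw [h0, norm_zero] at hnorm
    nlinarith [sq_nonneg (t * ‖p‖)]
  have hmem : v i - m • v j ∈ span ℤ (Set.range v) :=
    sub_mem (subset_span (Set.mem_range_self i))
      (zsmul_mem (subset_span (Set.mem_range_self j)) m)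
  have hle := hmin _ hmem (hproj ▸ hne)
  rw [hproj] at hle
  refine sqrt_three_div_two_mul_le_of_sq_le (norm_nonneg a) ht ?_
  rw [← hnorm]
  exact pow_le_pow_left₀ (norm_nonneg p) hle 2

end SpanBelow

/-- If `v₁, …, v_k` is a greedy basis of a rank-`k` lattice `L` — each `vᵢ` is of minimal
length among lifts of a shortest nonzero vector of `L/Lᵢ₋₁` — then with
`αᵢ = covol(Lᵢ/Lᵢ₋₁)` one has `αᵢ ≥ (√3/2) αᵢ₋₁` for `2 ≤ i ≤ k`, and
`‖vᵢ‖² ≤ αᵢ² + (1/4)(α₁² + ⋯ + αᵢ₋₁²)`. -/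
theorem stmt8 (k : ℕ) (v : Fin k → EuclideanSpace ℝ (Fin k))
    (hind : LinearIndependent ℝ v)
    (hlift : ∀ i : Fin k, ∀ u ∈ Submodule.span ℤ (v '' {j | j < i}), ‖v i‖ ≤ ‖v i + u‖)
    (hquot : ∀ i : Fin k, ∀ x ∈ Submodule.span ℤ (Set.range v),
      quotProj k v i x ≠ 0 → ‖quotProj k v i (v i)‖ ≤ ‖quotProj k v i x‖) :
    (∀ i j : Fin k, (j : ℕ) + 1 = (i : ℕ) →
      Real.sqrt 3 / 2 * alphaCovol k v j ≤ alphaCovol k v i) ∧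
    (∀ i : Fin k, ‖v i‖ ^ 2 ≤
      alphaCovol k v i ^ 2 +
        (1 / 4) * ∑ j ∈ Finset.univ.filter (fun j => j < i), alphaCovol k v j ^ 2) :=
  -- `quotProj k v n` unfolds to `projBelow v n`, so `alphaCovol k v i = ‖projBelow v i (v i)‖`.
  ⟨fun _ j hji => sqrt_three_div_two_mul_norm_projBelow_le hind hji (hquot j),
    fun i => norm_sq_le_of_forall_norm_le_norm_add i (hlift i)⟩
end

section
/- If $U$ is a bounded subset of $\mathbb{R}^n$ whose boundary has Lebesgue measure zero (i.e., $U$ has Jordan content), then $\lim_{r \to 0} r^n \cdot \#(U \cap r\mathbb{Z}^n) = \operatorname{vol}(U)$. -/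
/-!
Cover `ℝⁿ` by the half-open cubes `r • (v + [0,1)ⁿ)`, `v ∈ ℤⁿ`. The union `A r` of the cubes whose
lowest corner `r • v` lies in `U` has volume exactly `rⁿ · #(U ∩ rℤⁿ)`, and it is the set of
points whose rounding down to `rℤⁿ` lies in `U`. Since rounding moves points by at most `r`,
the indicator of `A r` converges to that of `U` at every point off `frontier U`, hence almost
everywhere, and dominated convergence gives `vol (A r) → vol U`.
-/

open Filter MeasureTheory Set Metric Topology
open scoped ENNReal

lemma eventually_mem_iff_of_notMem_frontier {X : Type*} [TopologicalSpace X] {s : Set X}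
    {x : X} (hx : x ∉ frontier s) : ∀ᶠ y in 𝓝 x, y ∈ s ↔ x ∈ s := by
  rw [← mem_compl_iff, compl_frontier_eq_union_interior] at hx
  rcases hx with hx | hx
  · filter_upwards [mem_interior_iff_mem_nhds.1 hx] with y hy
    exact iff_of_true hy (interior_subset hx)
  · filter_upwards [mem_interior_iff_mem_nhds.1 hx] with y hy
    exact iff_of_false hy (interior_subset hx)

section ScaledFloor

variable {ι : Type*}

noncomputable def scaledFloor (r : ℝ) (x : ι → ℝ) : ι → ℤ := fun i => ⌊x i / r⌋

lemma measurable_scaledFloor (r : ℝ) : Measurable (scaledFloor (ι := ι) r) := by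
  unfold scaledFloor; fun_prop

lemma scaledFloor_preimage_singleton {r : ℝ} (hr : 0 < r) (v : ι → ℤ) :
    scaledFloor r ⁻¹' {v} = univ.pi fun i => Ico (r * v i) (r * v i + r) := by
  ext x
  simp only [mem_preimage, mem_singleton_iff, funext_iff, scaledFloor, mem_univ_pi, mem_Ico,
    Int.floor_eq_iff, le_div_iff₀ hr, div_lt_iff₀ hr]
  refine forall_congr' fun i => ?_
  constructor <;> rintro ⟨h₁, h₂⟩ <;> constructor <;> linarith

lemma volume_scaledFloor_preimage [Fintype ι] {r : ℝ} (hr : 0 < r) (s : Set (ι → ℤ)) :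
    volume (scaledFloor r ⁻¹' s) = s.encard * ENNReal.ofReal r ^ Fintype.card ι := by
  have hcube (v : ι → ℤ) : volume (scaledFloor r ⁻¹' {v}) = ENNReal.ofReal r ^ Fintype.card ι := by
    simp [scaledFloor_preimage_singleton hr, volume_pi_pi, Real.volume_Ico]
  rw [← biUnion_preimage_singleton, measure_biUnion s.to_countable
    (fun v _ w _ hvw => (disjoint_singleton.2 hvw).preimage _)
    (fun v _ => measurable_scaledFloor r (measurableSet_singleton v))]
  simp only [hcube, ENNReal.tsum_set_const]

/-- For infinite `s` both sides are the junk value `0` of `toReal ∞` and of `ncard`. -/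
lemma toReal_volume_scaledFloor_preimage [Fintype ι] {r : ℝ} (hr : 0 < r) (s : Set (ι → ℤ)) :
    (volume (scaledFloor r ⁻¹' s)).toReal = r ^ Fintype.card ι * s.ncard := by
  rw [volume_scaledFloor_preimage hr]
  rcases s.finite_or_infinite with hs | hs
  · rw [← hs.cast_ncard_eq, ENNReal.toReal_mul, ENNReal.toReal_pow, ENNReal.toReal_ofReal hr.le]
    simp [mul_comm]
  · rw [hs.encard_eq, hs.ncard, ENat.toENNReal_top,
      ENNReal.top_mul (pow_ne_zero _ (ENNReal.ofReal_pos.2 hr).ne')]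
    simp

lemma dist_scaledFloor_le [Fintype ι] {r : ℝ} (hr : 0 < r) (x : ι → ℝ) :
    dist (fun i => r * (scaledFloor r x i : ℝ)) x ≤ r := by
  refine (dist_pi_le_iff hr.le).2 fun i => ?_
  have h₁ : (⌊x i / r⌋ : ℝ) ≤ x i / r := Int.floor_le _
  have h₂ : x i / r - 1 < ⌊x i / r⌋ := Int.sub_one_lt_floor _
  rw [le_div_iff₀ hr] at h₁
  rw [div_sub_one hr.ne', div_lt_iff₀ hr] at h₂
  rw [Real.dist_eq, abs_le, scaledFloor]
  constructor <;> linarith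

lemma tendsto_scaledFloor [Fintype ι] (x : ι → ℝ) :
    Tendsto (fun r => fun i => r * (scaledFloor r x i : ℝ)) (𝓝[>] 0) (𝓝 x) := by
  rw [tendsto_iff_dist_tendsto_zero]
  refine squeeze_zero' (Eventually.of_forall fun r => dist_nonneg) ?_
    (tendsto_id.mono_left nhdsWithin_le_nhds)
  filter_upwards [self_mem_nhdsWithin] with r hr
  exact dist_scaledFloor_le hr x

lemma scaledFloor_preimage_subset_cthickening [Fintype ι] {r : ℝ} (hr : 0 < r) (U : Set (ι → ℝ)) :
    scaledFloor r ⁻¹' {v | (fun i => r * (v i : ℝ)) ∈ U} ⊆ cthickening r U :=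
  fun x hx => mem_cthickening_of_dist_le x _ r U hx (dist_comm x _ ▸ dist_scaledFloor_le hr x)

lemma tendsto_volume_scaledFloor_preimage [Fintype ι] {U : Set (ι → ℝ)} (hU : Bornology.IsBounded U)
    (hfr : volume (frontier U) = 0) :
    Tendsto (fun r => volume (scaledFloor r ⁻¹' {v | (fun i => r * (v i : ℝ)) ∈ U}))
      (𝓝[>] 0) (𝓝 (volume U)) := by
  have hint := interior_ae_eq_of_null_frontier hfr
  rw [← measure_congr hint]
  refine tendsto_measure_of_ae_tendsto_indicator _ isOpen_interior.measurableSet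
    (fun r => measurable_scaledFloor r (to_countable _).measurableSet)
    isClosed_cthickening.measurableSet (hU.cthickening (δ := 1)).measure_lt_top.ne ?_ ?_
  · filter_upwards [Ioc_mem_nhdsGT one_pos] with r hr
    exact (scaledFloor_preimage_subset_cthickening hr.1 U).trans (cthickening_mono hr.2 U)
  · filter_upwards [measure_eq_zero_iff_ae_notMem.1 hfr, hint] with x hx hxU
    filter_upwards [tendsto_scaledFloor x (eventually_mem_iff_of_notMem_frontier hx)] with r hr
    exact hr.trans (iff_of_eq hxU.symm)

end ScaledFloor

/-- If `U` is a bounded subset of `ℝⁿ` whose boundary has Lebesgue measure zero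
(i.e. `U` has Jordan content), then `r^n · #(U ∩ rℤⁿ) → vol(U)` as `r → 0⁺`. -/
theorem stmt9 (n : ℕ) (U : Set (Fin n → ℝ)) (hbd : Bornology.IsBounded U)
    (hfr : volume (frontier U) = 0) :
    Tendsto
      (fun r : ℝ => r ^ n * ({v : Fin n → ℤ | (fun i => r * (v i : ℝ)) ∈ U}.ncard : ℝ))
      (nhdsWithin 0 (Set.Ioi 0)) (nhds (volume U).toReal) := by
  refine ((ENNReal.tendsto_toReal hbd.measure_lt_top.ne).comp
    (tendsto_volume_scaledFloor_preimage hbd hfr)).congr' ?_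
  filter_upwards [self_mem_nhdsWithin] with r hr
  simp only [Function.comp_apply, toReal_volume_scaledFloor_preimage hr, Fintype.card_fin]
end

section
/- Let $U \subseteq \mathbb{R}^n$ have boundary of measure zero and define $N_r(U) = r^n \cdot \#(U \cap r\mathbb{Z}^n)$. If $\lim_{R \to \infty} \limsup_{r \to 0} N_r(U \setminus B_R) = 0$, where $B_R$ is the closed ball of radius $R$ centered at the origin, then $\lim_{r \to 0} N_r(U) = \operatorname{vol}(U)$ (in particular the limit exists and $\operatorname{vol}(U) < \infty$). -/
/-!
`r^n · #(V ∩ rℤⁿ)` is the volume of the union of the half-open cubes of side `r` cornered at the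
lattice points of `V`. That union contains every point whose `ε`-ball lies in `V` (for `r < ε`)
and lies in the closed `r`-thickening of `V`, so as `r → 0⁺` the count is squeezed between
`vol (interior V)` and, for bounded `V`, `vol (closure V)`; both equal `vol V` when `∂V` is null.
For unbounded `U`, split off `U \ B_R`: the bounded part `U ∩ B_R` still has null frontier, and
the hypothesis makes the lattice count of the tail, hence also its volume, negligible as `R → ∞`.
-/

open Filter MeasureTheory

/-- The lattice-point count `N_r(V) = r^n · #(V ∩ rℤⁿ)`, valued in `ℝ≥0∞` so that it is
defined also for sets with infinitely many lattice points. -/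
noncomputable def latCount (n : ℕ) (r : ℝ) (V : Set (Fin n → ℝ)) : ENNReal :=
  ENNReal.ofReal (r ^ n) * ({v : Fin n → ℤ | (fun i => r * (v i : ℝ)) ∈ V}.encard : ENNReal)

open Set Metric Bornology Topology
open scoped ENNReal

theorem ENNReal.limsup_add_le_add_limsup {ι : Type*} (l : Filter ι) (u v : ι → ℝ≥0∞) :
    limsup (u + v) l ≤ limsup u l + limsup v l := by
  refine ENNReal.le_of_forall_pos_le_add fun ε hε hfin => ?_
  have hε2 : (ε : ℝ≥0∞) / 2 ≠ 0 := by simpa using hε.ne'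
  have hu := ENNReal.lt_add_right (ENNReal.add_lt_top.1 hfin).1.ne hε2
  have hv := ENNReal.lt_add_right (ENNReal.add_lt_top.1 hfin).2.ne hε2
  refine limsup_le_of_le (by isBoundedDefault) ?_
  filter_upwards [eventually_lt_of_limsup_lt hu, eventually_lt_of_limsup_lt hv] with i hui hvi
  calc u i + v i ≤ (limsup u l + ε / 2) + (limsup v l + ε / 2) := add_le_add hui.le hvi.le
    _ = limsup u l + limsup v l + ε := by rw [add_add_add_comm, ENNReal.add_halves]

theorem MeasureTheory.null_frontier_diff {α : Type*} [TopologicalSpace α] [MeasurableSpace α]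
    {μ : Measure α} {s t : Set α} (hs : μ (frontier s) = 0) (ht : μ (frontier t) = 0) :
    μ (frontier (s \ t)) = 0 :=
  sdiff_eq s t ▸ null_frontier_inter hs (by rwa [frontier_compl])

theorem MeasureTheory.Measure.addHaar_frontier_closedBall {E : Type*} [NormedAddCommGroup E]
    [NormedSpace ℝ E] [MeasurableSpace E] [BorelSpace E] [FiniteDimensional ℝ E] (μ : Measure E)
    [μ.IsAddHaarMeasure] (x : E) {r : ℝ} (hr : r ≠ 0) : μ (frontier (closedBall x r)) = 0 :=
  measure_mono_null (frontier_closedBall_subset_sphere) (μ.addHaar_sphere_of_ne_zero x hr)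

section Cube

variable {ι : Type*} {r : ℝ}

def latticeCube (r : ℝ) (v : ι → ℤ) : Set (ι → ℝ) :=
  univ.pi fun i => Ico (r * v i) (r * v i + r)

theorem mem_latticeCube_iff (hr : 0 < r) {x : ι → ℝ} {v : ι → ℤ} :
    x ∈ latticeCube r v ↔ ∀ i, ⌊x i / r⌋ = v i := by
  simp only [latticeCube, Set.mem_pi, mem_univ, true_implies, mem_Ico]
  refine forall_congr' fun i => ?_
  rw [Int.floor_eq_iff, le_div_iff₀ hr, div_lt_iff₀ hr]
  constructor <;> rintro ⟨h₁, h₂⟩ <;> constructor <;> linarith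

theorem mem_latticeCube_floor (hr : 0 < r) (x : ι → ℝ) :
    x ∈ latticeCube r (fun i => ⌊x i / r⌋) :=
  (mem_latticeCube_iff hr).2 fun _ => rfl

theorem pairwise_disjoint_latticeCube (hr : 0 < r) :
    Pairwise fun v w : ι → ℤ => Disjoint (latticeCube r v) (latticeCube r w) := by
  refine fun v w hvw => disjoint_left.2 fun x hv hw => hvw (funext fun i => ?_)
  rw [← (mem_latticeCube_iff hr).1 hv i, (mem_latticeCube_iff hr).1 hw i]

theorem volume_latticeCube [Fintype ι] (v : ι → ℤ) :
    volume (latticeCube r v) = ENNReal.ofReal r ^ Fintype.card ι := by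
  simp [latticeCube, volume_pi_pi, Real.volume_Ico]

theorem dist_le_of_mem_latticeCube [Fintype ι] (hr : 0 < r) {x : ι → ℝ} {v : ι → ℤ}
    (hx : x ∈ latticeCube r v) : dist x (fun i => r * (v i : ℝ)) ≤ r := by
  refine (dist_pi_le_iff hr.le).2 fun i => ?_
  obtain ⟨h₁, h₂⟩ := hx i (mem_univ i)
  rw [Real.dist_eq, abs_le]
  constructor <;> linarith

end Cube

section LatticeCount

variable {n : ℕ} {r : ℝ}

theorem latCount_eq_volume_biUnion_latticeCube (hr : 0 < r) (V : Set (Fin n → ℝ)) :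
    latCount n r V =
      volume (⋃ v ∈ {v : Fin n → ℤ | (fun i => r * (v i : ℝ)) ∈ V}, latticeCube r v) := by
  rw [measure_biUnion (to_countable _) ((pairwise_disjoint_latticeCube hr).set_pairwise _)
    fun v _ => MeasurableSet.univ_pi fun _ => measurableSet_Ico]
  simp only [volume_latticeCube, Fintype.card_fin, ENNReal.tsum_set_const, latCount,
    ENNReal.ofReal_pow hr.le, mul_comm]

theorem latCount_le_volume_cthickening (hr : 0 < r) (V : Set (Fin n → ℝ)) :
    latCount n r V ≤ volume (cthickening r V) := by
  rw [latCount_eq_volume_biUnion_latticeCube hr]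
  exact measure_mono <| iUnion₂_subset fun v hv x hx =>
    mem_cthickening_of_dist_le x _ r V hv (dist_le_of_mem_latticeCube hr hx)

theorem volume_le_latCount {ε : ℝ} (hr : 0 < r) (hrε : r < ε) (V : Set (Fin n → ℝ)) :
    volume {x | ball x ε ⊆ V} ≤ latCount n r V := by
  rw [latCount_eq_volume_biUnion_latticeCube hr]
  refine measure_mono fun x hx => mem_biUnion (hx ?_) (mem_latticeCube_floor hr x)
  rw [mem_ball, dist_comm]
  exact (dist_le_of_mem_latticeCube hr (mem_latticeCube_floor hr x)).trans_lt hrε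

theorem latCount_inter_add_diff (r : ℝ) (U B : Set (Fin n → ℝ)) :
    latCount n r (U ∩ B) + latCount n r (U \ B) = latCount n r U := by
  simp only [latCount, ← mul_add, ← ENat.toENNReal_add]
  rw [← encard_union_eq (disjoint_left.2 fun v hB hB' => hB'.2 hB.2)]
  congr 4
  ext v
  simp only [mem_union, mem_ofPred_eq, mem_inter_iff, Set.mem_sdiff]
  tauto

theorem volume_interior_le_liminf_latCount (V : Set (Fin n → ℝ)) :
    volume (interior V) ≤ liminf (fun r => latCount n r V) (𝓝[>] 0) := by
  have hinterior : interior V = ⋃ k : ℕ, {x | ball x (1 / (k + 1)) ⊆ V} := by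
    ext x
    simp [mem_interior_iff_mem_nhds, nhds_basis_ball_inv_nat_succ.mem_iff]
  have hmono : Monotone fun k : ℕ => {x : Fin n → ℝ | ball x (1 / (k + 1)) ⊆ V} :=
    fun k l hkl x hx => (ball_subset_ball (Nat.one_div_le_one_div hkl)).trans hx
  rw [hinterior, hmono.measure_iUnion]
  refine iSup_le fun k => le_liminf_of_le (by isBoundedDefault) ?_
  filter_upwards [Ioo_mem_nhdsGT Nat.one_div_pos_of_nat] with r hr
  exact volume_le_latCount hr.1 hr.2 V

theorem volume_le_liminf_latCount {V : Set (Fin n → ℝ)} (hV : volume (frontier V) = 0) :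
    volume V ≤ liminf (fun r => latCount n r V) (𝓝[>] 0) :=
  (measure_interior_of_null_frontier hV).symm.le.trans (volume_interior_le_liminf_latCount V)

theorem limsup_latCount_le_volume {V : Set (Fin n → ℝ)} (hb : IsBounded V)
    (hV : volume (frontier V) = 0) :
    limsup (fun r => latCount n r V) (𝓝[>] 0) ≤ volume V := by
  have hthick : Tendsto (fun r => volume (cthickening r V)) (𝓝[>] 0) (𝓝 (volume V)) := by
    rw [← measure_closure_of_null_frontier hV]
    exact (tendsto_measure_cthickening ⟨1, one_pos, hb.cthickening.measure_lt_top.ne⟩).mono_left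
      nhdsWithin_le_nhds
  calc limsup (fun r => latCount n r V) (𝓝[>] 0)
      ≤ limsup (fun r => volume (cthickening r V)) (𝓝[>] 0) :=
        limsup_le_limsup (eventually_mem_nhdsWithin.mono fun r hr =>
          latCount_le_volume_cthickening hr V)
    _ = volume V := hthick.limsup_eq

variable {U B : Set (Fin n → ℝ)}

theorem volume_le_volume_add_limsup_latCount_diff (hU : volume (frontier U) = 0)
    (hB : volume (frontier B) = 0) :
    volume U ≤ volume B + limsup (fun r => latCount n r (U \ B)) (𝓝[>] 0) :=
  calc volume U ≤ volume (U ∩ B) + volume (U \ B) := measure_le_inter_add_sdiff _ _ _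
    _ ≤ volume B + limsup (fun r => latCount n r (U \ B)) (𝓝[>] 0) :=
      add_le_add (measure_mono inter_subset_right)
        ((volume_le_liminf_latCount (null_frontier_diff hU hB)).trans liminf_le_limsup)

theorem volume_le_liminf_latCount_add_limsup_diff (hU : volume (frontier U) = 0)
    (hB : volume (frontier B) = 0) :
    volume U ≤ liminf (fun r => latCount n r U) (𝓝[>] 0) +
      limsup (fun r => latCount n r (U \ B)) (𝓝[>] 0) :=
  calc volume U ≤ volume (U ∩ B) + volume (U \ B) := measure_le_inter_add_sdiff _ _ _
    _ ≤ liminf (fun r => latCount n r (U ∩ B)) (𝓝[>] 0) +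
          limsup (fun r => latCount n r (U \ B)) (𝓝[>] 0) :=
      add_le_add (volume_le_liminf_latCount (null_frontier_inter hU hB))
        ((volume_le_liminf_latCount (null_frontier_diff hU hB)).trans liminf_le_limsup)
    _ ≤ _ := by
      gcongr
      exact liminf_le_liminf (.of_forall fun r => latCount_inter_add_diff r U B ▸ le_self_add)

theorem limsup_latCount_le_volume_add_limsup_diff (hU : volume (frontier U) = 0)
    (hB : volume (frontier B) = 0) (hBb : IsBounded B) :
    limsup (fun r => latCount n r U) (𝓝[>] 0) ≤
      volume U + limsup (fun r => latCount n r (U \ B)) (𝓝[>] 0) :=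
  calc limsup (fun r => latCount n r U) (𝓝[>] 0)
      = limsup ((fun r => latCount n r (U ∩ B)) + fun r => latCount n r (U \ B)) (𝓝[>] 0) := by
        simp only [Pi.add_def, latCount_inter_add_diff]
    _ ≤ limsup (fun r => latCount n r (U ∩ B)) (𝓝[>] 0) +
          limsup (fun r => latCount n r (U \ B)) (𝓝[>] 0) :=
      ENNReal.limsup_add_le_add_limsup _ _ _
    _ ≤ volume U + limsup (fun r => latCount n r (U \ B)) (𝓝[>] 0) := by
      gcongr
      exact (limsup_latCount_le_volume (hBb.subset inter_subset_right)
        (null_frontier_inter hU hB)).trans (measure_mono inter_subset_left)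

end LatticeCount

/-- Let `U ⊆ ℝⁿ` have boundary of measure zero.  If
`lim_{R → ∞} limsup_{r → 0⁺} N_r(U \ B_R) = 0`, where `B_R` is the closed ball of radius
`R` about the origin, then `vol(U) < ∞` and `N_r(U) → vol(U)` as `r → 0⁺`. -/
theorem stmt10 (n : ℕ) (U : Set (Fin n → ℝ)) (hfr : volume (frontier U) = 0)
    (h : Tendsto
      (fun R : ℝ => Filter.limsup
        (fun r : ℝ => latCount n r (U \ Metric.closedBall 0 R))
        (nhdsWithin 0 (Set.Ioi 0)))
      atTop (nhds 0)) :
    volume U ≠ ⊤ ∧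
      Tendsto (fun r : ℝ => latCount n r U) (nhdsWithin 0 (Set.Ioi 0)) (nhds (volume U)) := by
  have hball : ∀ᶠ R in atTop, IsBounded (closedBall (0 : Fin n → ℝ) R) ∧
      volume (frontier (closedBall (0 : Fin n → ℝ) R)) = 0 :=
    (eventually_gt_atTop 0).mono fun R hR =>
      ⟨isBounded_closedBall, volume.addHaar_frontier_closedBall 0 hR.ne'⟩
  have hfin : volume U ≠ ⊤ := by
    obtain ⟨R, ⟨hBb, hB⟩, htail⟩ := (hball.and (h.eventually_lt_const ENNReal.zero_lt_top)).exists
    exact ne_top_of_le_ne_top (ENNReal.add_ne_top.2 ⟨hBb.measure_lt_top.ne, htail.ne⟩)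
      (volume_le_volume_add_limsup_latCount_diff hfr hB)
  refine ⟨hfin, tendsto_of_le_liminf_of_limsup_le ?_ ?_⟩
  · simpa using ge_of_tendsto (h.const_add _)
      (hball.mono fun R hR => volume_le_liminf_latCount_add_limsup_diff hfr hR.2)
  · simpa using ge_of_tendsto (h.const_add _)
      (hball.mono fun R hR => limsup_latCount_le_volume_add_limsup_diff hfr hR.2 hR.1)
end

section
/- Let $U \subseteq \mathbb{R}^n$ have boundary of measure zero. If $\operatorname{vol}(U) = +\infty$ then $\lim_{r \to 0} r^n \cdot \#(U \cap r\mathbb{Z}^n) = +\infty$. -/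
open Filter MeasureTheory Set ENNReal

/-- If `U ⊆ ℝⁿ` has boundary of measure zero and infinite volume, then the lattice-point
count `r^n · #(U ∩ rℤⁿ)` tends to `∞` as `r → 0⁺`. -/
theorem stmt11 (n : ℕ) (U : Set (Fin n → ℝ)) (hfr : volume (frontier U) = 0)
    (hvol : volume U = ⊤) :
    Tendsto
      (fun r : ℝ => ENNReal.ofReal (r ^ n) *
        ({v : Fin n → ℤ | (fun i => r * (v i : ℝ)) ∈ U}.encard : ENNReal))
      (nhdsWithin 0 (Set.Ioi 0)) (nhds ⊤) := by
  -- interior has infinite volume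
  have hint : volume (interior U) = ⊤ := by
    have h1 : volume U ≤ volume (interior U) + volume (frontier U) := by
      refine (measure_mono ?_).trans (measure_union_le _ _)
      exact subset_closure.trans (by rw [closure_eq_interior_union_frontier U])
    rw [hfr, add_zero] at h1
    exact top_le_iff.mp (hvol ▸ h1)
  rw [ENNReal.tendsto_nhds_top_iff_nat]
  intro N
  -- pick compact K ⊆ interior U with N < volume K
  obtain ⟨K, hKU, hKc, hKN⟩ := isOpen_interior.exists_lt_isCompact
    (show (N : ℝ≥0∞) < volume (interior U) by simp [hint])
  obtain ⟨δ, hδ, hthick⟩ := hKc.exists_thickening_subset_open isOpen_interior hKU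
  filter_upwards [Ioo_mem_nhdsGT hδ] with r hr
  obtain ⟨hr0, hrδ⟩ := hr
  set S := {v : Fin n → ℤ | (fun i => r * (v i : ℝ)) ∈ U} with hS
  have hrn : (0:ℝ≥0∞) < ENNReal.ofReal (r ^ n) := by positivity
  -- K is covered by cubes indexed by S
  have hcover : K ⊆ ⋃ v ∈ S, Set.pi Set.univ fun i => Ico (r * (v i : ℝ)) (r * v i + r) := by
    intro x hx
    set v : Fin n → ℤ := fun i => ⌊x i / r⌋ with hv
    have hmem : ∀ i, x i ∈ Ico (r * (v i : ℝ)) (r * v i + r) := by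
      intro i
      constructor
      · rw [mul_comm]
        exact (le_div_iff₀ hr0).mp (Int.floor_le (x i / r))
      · have := Int.lt_floor_add_one (x i / r)
        calc x i = (x i / r) * r := by field_simp
          _ < ((v i : ℝ) + 1) * r := by exact mul_lt_mul_of_pos_right this hr0
          _ = r * v i + r := by ring
    have hvS : v ∈ S := by
      have : (fun i => r * (v i : ℝ)) ∈ Metric.thickening δ K := by
        rw [Metric.mem_thickening_iff]
        refine ⟨x, hx, lt_of_le_of_lt ?_ hrδ⟩
        rw [dist_pi_le_iff hr0.le]
        intro i
        rw [Real.dist_eq, abs_le]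
        have h := hmem i
        constructor <;> [linarith [h.2.le]; linarith [h.1]]
      show (fun i => r * (v i : ℝ)) ∈ U
      exact interior_subset (hthick this)
    exact mem_biUnion hvS fun i _ => hmem i
  by_cases hfin : S.Finite
  · have hμ : volume K ≤ S.encard * ENNReal.ofReal (r ^ n) := by
      calc volume K ≤ volume (⋃ v ∈ hfin.toFinset,
            Set.pi Set.univ fun i => Ico (r * (v i : ℝ)) (r * v i + r)) := by
            refine measure_mono (hcover.trans ?_)
            simp [hfin.mem_toFinset]
        _ ≤ ∑ v ∈ hfin.toFinset, volume (Set.pi Set.univ fun i => Ico (r * (v i : ℝ)) (r * v i + r)) :=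
            measure_biUnion_finset_le _ _
        _ = ∑ v ∈ hfin.toFinset, ENNReal.ofReal (r ^ n) := by
            refine Finset.sum_congr rfl fun v _ => ?_
            rw [volume_pi_pi]
            simp only [Real.volume_Ico, add_sub_cancel_left]
            rw [Finset.prod_const, ENNReal.ofReal_pow hr0.le]
            simp
        _ = S.encard * ENNReal.ofReal (r ^ n) := by
            rw [Finset.sum_const, hfin.encard_eq_coe_toFinset_card, nsmul_eq_mul]
            norm_cast
    calc (N : ℝ≥0∞) < volume K := hKN
      _ ≤ S.encard * ENNReal.ofReal (r ^ n) := hμ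
      _ = ENNReal.ofReal (r ^ n) * S.encard := mul_comm _ _
  · rw [Set.Infinite.encard_eq hfin]
    simp only [ENat.toENNReal_top, ENNReal.mul_top hrn.ne']
    exact ENNReal.natCast_lt_top N
end

section
/- Let $f(s) = \sum a_n n^{-s}$ and $g(s) = \sum b_n n^{-s}$ be Dirichlet series with nonnegative coefficients, with summatory functions $A(T) = \sum_{n\le T} a_n$ and $B(T) = \sum_{n\le T} b_n$. Suppose $A(T) = O(T^i)$ and $B(T) = cT^k + O(T^j)$ with $i \le j < k$. Let $c_n = \sum_{pq=n} a_p b_q$ and $C(T) = \sum_{n \le T} c_n$. Then $C(T) = c\, f(k)\, T^k + O(T^j \log T)$ if $i = j$, and $C(T) = c\, f(k)\, T^k + O(T^j)$ if $i < j$. -/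
/-!
Write `B(x) = c x^k + E(x)` with `|E(x)| ≤ M x^j` for all `x ≥ 1`. Since
`C(T) = ∑_{d ≤ T} a_d B(T/d)`,
`C(T) - c f(k) T^k = ∑_{d ≤ T} a_d E(T/d) - c T^k ∑_{d > T} a_d d^{-k}`,
so the error is at most `M T^j ∑_{d ≤ T} a_d d^{-j} + |c| T^k ∑_{d > T} a_d d^{-k}`.
Both weighted sums are cut into dyadic blocks `[2^r, 2^{r+1})`; on such a block `A = O(T^i)`
bounds `∑ a_d d^t` by `O((2^{i+t})^r)`. For `i + t < 0` this is a convergent geometric series,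
giving `∑_{d > T} a_d d^{-k} = O(T^{i-k})` and, when `i < j`, `∑_{d ≤ T} a_d d^{-j} = O(1)`;
for `i = j` each of the `O(log T)` blocks contributes `O(1)`.
-/

open Filter Asymptotics Finset Real

theorem sum_Icc_sum_divisors_mul {R : Type*} [Semiring R] (a b : ℕ → R) (N : ℕ) :
    ∑ n ∈ Icc 1 N, ∑ d ∈ n.divisors, a d * b (n / d) =
      ∑ d ∈ Icc 1 N, a d * ∑ m ∈ Icc 1 (N / d), b m := by
  let f : ArithmeticFunction R := ⟨fun n => if n = 0 then 0 else a n, if_pos rfl⟩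
  let g : ArithmeticFunction R := ⟨fun n => if n = 0 then 0 else b n, if_pos rfl⟩
  have key := ArithmeticFunction.sum_Ioc_mul_eq_sum_sum f g N
  simp only [← Icc_add_one_left_eq_Ioc, zero_add, ArithmeticFunction.mul_apply,
    Nat.sum_divisorsAntidiagonal (fun x y => f x * g y)] at key
  convert key using 1
  · refine sum_congr rfl fun n _ => sum_congr rfl fun d hd => ?_
    have hd0 := Nat.pos_of_mem_divisors hd
    have hnd := Nat.div_pos (Nat.divisor_le hd) hd0
    simp [f, g, hd0.ne', hnd.ne']
  · refine sum_congr rfl fun d hd => ?_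
    have hd0 : d ≠ 0 := by grind
    simp only [f, g, ArithmeticFunction.coe_mk, hd0, if_false]
    congr 1
    exact sum_congr rfl fun m hm => by grind

theorem sum_Icc_sum_divisors_sub_eventuallyEq (a b : ℕ → ℝ) (c k F : ℝ) :
    (fun T : ℝ => ∑ n ∈ Icc 1 ⌊T⌋₊, ∑ d ∈ n.divisors, a d * b (n / d) - c * F * T ^ k) =ᶠ[atTop]
      fun T => ∑ d ∈ Icc 1 ⌊T⌋₊, a d * (∑ m ∈ Icc 1 ⌊T / d⌋₊, b m - c * (T / d) ^ k) -
        c * (T ^ k * (F - ∑ d ∈ Icc 1 ⌊T⌋₊, a d * (d : ℝ) ^ (-k))) := by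
  filter_upwards [eventually_ge_atTop 0] with T hT
  have hsplit : ∀ d ∈ Icc 1 ⌊T⌋₊, a d * ∑ m ∈ Icc 1 (⌊T⌋₊ / d), b m =
      a d * (∑ m ∈ Icc 1 ⌊T / d⌋₊, b m - c * (T / d) ^ k) + c * T ^ k * (a d * (d : ℝ) ^ (-k)) :=
    fun d _ => by
      rw [Nat.floor_div_natCast, div_rpow hT (Nat.cast_nonneg d), rpow_neg (Nat.cast_nonneg d)]
      ring
  rw [sum_Icc_sum_divisors_mul, sum_congr rfl hsplit, sum_add_distrib, ← mul_sum]
  ring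

theorem isBigO_sum_mul_comp_div {a : ℕ → ℝ} (ha : ∀ n, 0 ≤ a n) {E : ℝ → ℝ} {M j : ℝ}
    (hE : ∀ x, 1 ≤ x → |E x| ≤ M * x ^ j) :
    (fun T : ℝ => ∑ d ∈ Icc 1 ⌊T⌋₊, a d * E (T / d))
      =O[atTop] fun T => T ^ j * ∑ d ∈ Icc 1 ⌊T⌋₊, a d * (d : ℝ) ^ (-j) := by
  refine IsBigO.of_bound M ?_
  filter_upwards [eventually_ge_atTop 0] with T hT
  rw [norm_eq_abs, norm_of_nonneg (mul_nonneg (by positivity)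
    (sum_nonneg fun d _ => mul_nonneg (ha d) (by positivity))), mul_sum, mul_sum]
  refine (abs_sum_le_sum_abs _ _).trans (sum_le_sum fun d hd => ?_)
  have hd : 1 ≤ d ∧ d ≤ ⌊T⌋₊ := mem_Icc.1 hd
  have hdT : 1 ≤ T / d := by
    rw [one_le_div (by exact_mod_cast hd.1)]
    exact (Nat.le_floor_iff hT).1 hd.2
  calc |a d * E (T / d)| = a d * |E (T / d)| := by rw [abs_mul, abs_of_nonneg (ha d)]
    _ ≤ a d * (M * (T / d) ^ j) := mul_le_mul_of_nonneg_left (hE _ hdT) (ha d)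
    _ = M * (T ^ j * (a d * (d : ℝ) ^ (-j))) := by
        rw [div_rpow hT (Nat.cast_nonneg d), rpow_neg (Nat.cast_nonneg d)]; ring

theorem rpow_le_max_one_rpow {x y s : ℝ} (hx : 1 ≤ x) (hxy : x ≤ y) :
    x ^ s ≤ max 1 (y ^ s) := by
  rcases le_total 0 s with hs | hs
  · exact le_max_of_le_right (rpow_le_rpow (by linarith) hxy hs)
  · exact le_max_of_le_left (rpow_le_one_of_one_le_of_nonpos hx hs)

theorem exists_abs_le_mul_rpow_of_isBigO {F : ℝ → ℝ} {e : ℝ}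
    (h : F =O[atTop] fun x => x ^ e) (hloc : ∀ y, ∃ D, ∀ x ∈ Set.Icc 1 y, |F x| ≤ D) :
    ∃ M, ∀ x, 1 ≤ x → |F x| ≤ M * x ^ e := by
  obtain ⟨C, hC⟩ := h.bound
  obtain ⟨y, hy⟩ := eventually_atTop.1 hC
  obtain ⟨D, hD⟩ := hloc y
  refine ⟨max C 0 + max D 0 * max 1 (y ^ (-e)), fun x hx => ?_⟩
  have hx0 : 0 < x := by linarith
  rcases le_total y x with hyx | hxy
  · calc |F x| ≤ C * x ^ e := by simpa [abs_of_pos (rpow_pos_of_pos hx0 e)] using hy x hyx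
      _ ≤ _ := by
          gcongr
          exact le_add_of_le_of_nonneg (le_max_left _ _) (by positivity)
  · calc |F x| ≤ max D 0 := (hD x ⟨hx, hxy⟩).trans (le_max_left _ _)
      _ = max D 0 * x ^ (-e) * x ^ e := by
          rw [rpow_neg hx0.le, mul_assoc, inv_mul_cancel₀ (rpow_pos_of_pos hx0 e).ne', mul_one]
      _ ≤ max D 0 * max 1 (y ^ (-e)) * x ^ e := by
          gcongr
          exact rpow_le_max_one_rpow hx hxy
      _ ≤ _ := by
          gcongr
          exact le_add_of_nonneg_left (le_max_right _ _)

theorem abs_sum_Icc_floor_sub_mul_rpow_le {b : ℕ → ℝ} (hb : ∀ n, 0 ≤ b n) (c k : ℝ) {x y : ℝ}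
    (hx : 1 ≤ x) (hxy : x ≤ y) :
    |∑ n ∈ Icc 1 ⌊x⌋₊, b n - c * x ^ k| ≤ ∑ n ∈ Icc 1 ⌊y⌋₊, b n + |c| * max 1 (y ^ k) := by
  have hsum : |∑ n ∈ Icc 1 ⌊x⌋₊, b n| ≤ ∑ n ∈ Icc 1 ⌊y⌋₊, b n := by
    rw [abs_of_nonneg (sum_nonneg fun n _ => hb n)]
    exact sum_le_sum_of_subset_of_nonneg (Icc_subset_Icc_right (Nat.floor_mono hxy))
      fun n _ _ => hb n
  have hpow : |c * x ^ k| ≤ |c| * max 1 (y ^ k) := by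
    rw [abs_mul, abs_of_pos (rpow_pos_of_pos (by linarith) k)]
    exact mul_le_mul_of_nonneg_left (rpow_le_max_one_rpow hx hxy) (abs_nonneg c)
  exact (abs_sub _ _).trans (add_le_add hsum hpow)

theorem exists_sum_Icc_le_mul_rpow_of_isBigO {a : ℕ → ℝ} {i : ℝ}
    (hA : (fun T : ℝ => ∑ n ∈ Icc 1 ⌊T⌋₊, a n) =O[atTop] fun T => T ^ i) :
    ∃ K, 0 ≤ K ∧ ∀ N : ℕ, ∑ n ∈ Icc 1 N, a n ≤ K * (N : ℝ) ^ i := by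
  obtain ⟨K, hK, hbound⟩ := bound_of_isBigO_nat_atTop (hA.comp_tendsto tendsto_natCast_atTop_atTop)
  refine ⟨K, hK.le, fun N => ?_⟩
  rcases N.eq_zero_or_pos with rfl | hN
  · simp only [Nat.cast_zero, Icc_eq_empty_of_lt zero_lt_one, sum_empty]
    positivity
  · have hNi : 0 < (N : ℝ) ^ i := by positivity
    have hN' := hbound hNi.ne'
    simp only [Function.comp_apply, Nat.floor_natCast, norm_eq_abs, abs_of_pos hNi] at hN'
    exact (le_abs_self _).trans hN'

theorem isBigO_rpow_rpow_atTop_of_le {i j : ℝ} (hij : i ≤ j) :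
    (fun T : ℝ => T ^ i) =O[atTop] fun T => T ^ j := by
  refine IsBigO.of_bound 1 ?_
  filter_upwards [eventually_ge_atTop 1] with T hT
  simp only [norm_eq_abs, abs_of_pos (rpow_pos_of_pos (zero_lt_one.trans_le hT) _), one_mul]
  exact rpow_le_rpow_of_exponent_le hT hij

theorem sum_Ico_eq_sum_Ico_sum_Ico {M : Type*} [AddCommMonoid M] (f : ℕ → M) {u : ℕ → ℕ}
    (hu : Monotone u) {P Q : ℕ} (hPQ : P ≤ Q) :
    ∑ d ∈ Ico (u P) (u Q), f d = ∑ r ∈ Ico P Q, ∑ d ∈ Ico (u r) (u (r + 1)), f d := by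
  induction Q, hPQ using Nat.le_induction with
  | base => simp
  | succ Q hPQ ih =>
    rw [← sum_Ico_consecutive f (hu hPQ) (hu Q.le_succ), ih, sum_Ico_succ_top hPQ]

theorem sum_range_ite_eq_sum_Ico {M : Type*} [AddCommMonoid M] (f : ℕ → M) (L : ℕ) :
    ∑ n ∈ range L, (if 1 ≤ n then f n else 0) = ∑ n ∈ Ico 1 L, f n := by
  rw [← sum_filter]
  congr 1
  ext n
  simp only [mem_filter, mem_range, mem_Ico]
  omega

theorem rpow_le_of_mem_Ico_two_pow {d r : ℕ} (hd : d ∈ Ico (2 ^ r) (2 ^ (r + 1))) (t : ℝ) :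
    (d : ℝ) ^ t ≤ ((2 : ℝ) ^ t) ^ r * max 1 (2 ^ t) := by
  rw [mem_Ico] at hd
  have hlow : (2 : ℝ) ^ r ≤ d := by exact_mod_cast hd.1
  have hupp : (d : ℝ) ≤ 2 ^ (r + 1) := by exact_mod_cast hd.2.le
  rw [rpow_pow_comm zero_le_two]
  rcases le_total 0 t with ht | ht
  · calc (d : ℝ) ^ t ≤ ((2 : ℝ) ^ (r + 1)) ^ t := rpow_le_rpow (by positivity) hupp ht
      _ = ((2 : ℝ) ^ r) ^ t * 2 ^ t := by rw [pow_succ, mul_rpow (by positivity) zero_le_two]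
      _ ≤ _ := by gcongr; exact le_max_right _ _
  · calc (d : ℝ) ^ t ≤ ((2 : ℝ) ^ r) ^ t := rpow_le_rpow_of_nonpos (by positivity) hlow ht
      _ ≤ _ := le_mul_of_one_le_right (by positivity) (le_max_left _ _)

section Dyadic

variable {a : ℕ → ℝ} {K i : ℝ}

theorem sum_Ico_two_pow_mul_rpow_le (ha : ∀ n, 0 ≤ a n)
    (hA : ∀ N : ℕ, ∑ n ∈ Icc 1 N, a n ≤ K * (N : ℝ) ^ i) (t : ℝ) (r : ℕ) :
    ∑ d ∈ Ico (2 ^ r) (2 ^ (r + 1)), a d * (d : ℝ) ^ t ≤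
      K * 2 ^ i * max 1 (2 ^ t) * ((2 : ℝ) ^ (i + t)) ^ r := by
  have hblock : ∑ d ∈ Ico (2 ^ r) (2 ^ (r + 1)), a d ≤ K * 2 ^ i * ((2 : ℝ) ^ i) ^ r :=
    calc ∑ d ∈ Ico (2 ^ r) (2 ^ (r + 1)), a d ≤ ∑ d ∈ Icc 1 (2 ^ (r + 1)), a d :=
          sum_le_sum_of_subset_of_nonneg
            (fun d hd => by simp only [mem_Ico, mem_Icc] at hd ⊢; have := r.one_le_two_pow; omega)
            (fun d _ _ => ha d)
      _ ≤ K * ((2 ^ (r + 1) : ℕ) : ℝ) ^ i := hA _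
      _ = K * 2 ^ i * ((2 : ℝ) ^ i) ^ r := by
          rw [Nat.cast_pow, Nat.cast_ofNat, ← rpow_pow_comm zero_le_two, pow_succ]; ring
  calc ∑ d ∈ Ico (2 ^ r) (2 ^ (r + 1)), a d * (d : ℝ) ^ t
      ≤ ∑ d ∈ Ico (2 ^ r) (2 ^ (r + 1)), a d * (((2 : ℝ) ^ t) ^ r * max 1 (2 ^ t)) :=
        sum_le_sum fun d hd => mul_le_mul_of_nonneg_left (rpow_le_of_mem_Ico_two_pow hd t) (ha d)
    _ = (∑ d ∈ Ico (2 ^ r) (2 ^ (r + 1)), a d) * (((2 : ℝ) ^ t) ^ r * max 1 (2 ^ t)) :=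
        (sum_mul ..).symm
    _ ≤ K * 2 ^ i * ((2 : ℝ) ^ i) ^ r * (((2 : ℝ) ^ t) ^ r * max 1 (2 ^ t)) := by
        gcongr
    _ = K * 2 ^ i * max 1 (2 ^ t) * ((2 : ℝ) ^ (i + t)) ^ r := by
        rw [rpow_add two_pos, mul_pow]; ring

theorem sum_Ico_mul_rpow_le_geom_sum (ha : ∀ n, 0 ≤ a n)
    (hA : ∀ N : ℕ, ∑ n ∈ Icc 1 N, a n ≤ K * (N : ℝ) ^ i) (t : ℝ) {P Q M L : ℕ}
    (hM : 2 ^ P ≤ M) (hL : L ≤ 2 ^ Q) :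
    ∑ d ∈ Ico M L, a d * (d : ℝ) ^ t ≤
      K * 2 ^ i * max 1 (2 ^ t) * ∑ r ∈ Ico P Q, ((2 : ℝ) ^ (i + t)) ^ r := by
  rcases le_total P Q with hPQ | hQP
  · calc ∑ d ∈ Ico M L, a d * (d : ℝ) ^ t ≤ ∑ d ∈ Ico (2 ^ P) (2 ^ Q), a d * (d : ℝ) ^ t :=
          sum_le_sum_of_subset_of_nonneg (Ico_subset_Ico hM hL)
            (fun d _ _ => mul_nonneg (ha d) (by positivity))
      _ = ∑ r ∈ Ico P Q, ∑ d ∈ Ico (2 ^ r) (2 ^ (r + 1)), a d * (d : ℝ) ^ t :=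
          sum_Ico_eq_sum_Ico_sum_Ico _ (pow_right_monotone one_le_two) hPQ
      _ ≤ ∑ r ∈ Ico P Q, K * 2 ^ i * max 1 (2 ^ t) * ((2 : ℝ) ^ (i + t)) ^ r :=
          sum_le_sum fun r _ => sum_Ico_two_pow_mul_rpow_le ha hA t r
      _ = _ := (mul_sum ..).symm
  · have hLM : L ≤ M := hL.trans ((Nat.pow_le_pow_right two_pos hQP).trans hM)
    simp [Ico_eq_empty_of_le hLM, Ico_eq_empty_of_le hQP]

theorem sum_Ico_mul_rpow_le_of_add_neg (ha : ∀ n, 0 ≤ a n)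
    (hA : ∀ N : ℕ, ∑ n ∈ Icc 1 N, a n ≤ K * (N : ℝ) ^ i) (hK : 0 ≤ K) {t : ℝ} (hit : i + t < 0)
    {P M : ℕ} (hM : 2 ^ P ≤ M) (L : ℕ) :
    ∑ d ∈ Ico M L, a d * (d : ℝ) ^ t ≤
      K * 2 ^ i * max 1 (2 ^ t) / (1 - 2 ^ (i + t)) * ((2 : ℝ) ^ (i + t)) ^ P := by
  have hq : (2 : ℝ) ^ (i + t) < 1 := rpow_lt_one_of_one_lt_of_neg one_lt_two hit
  calc ∑ d ∈ Ico M L, a d * (d : ℝ) ^ t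
      ≤ K * 2 ^ i * max 1 (2 ^ t) * ∑ r ∈ Ico P L, ((2 : ℝ) ^ (i + t)) ^ r :=
        sum_Ico_mul_rpow_le_geom_sum ha hA t hM Nat.lt_two_pow_self.le
    _ ≤ K * 2 ^ i * max 1 (2 ^ t) * (((2 : ℝ) ^ (i + t)) ^ P / (1 - 2 ^ (i + t))) := by
        gcongr; exact geom_sum_Ico_le_of_lt_one (by positivity) hq
    _ = _ := by ring

theorem sum_Icc_mul_rpow_le_of_add_neg (ha : ∀ n, 0 ≤ a n)
    (hA : ∀ N : ℕ, ∑ n ∈ Icc 1 N, a n ≤ K * (N : ℝ) ^ i) (hK : 0 ≤ K) {t : ℝ} (hit : i + t < 0)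
    (N : ℕ) :
    ∑ d ∈ Icc 1 N, a d * (d : ℝ) ^ t ≤ K * 2 ^ i * max 1 (2 ^ t) / (1 - 2 ^ (i + t)) := by
  simpa [Ico_add_one_right_eq_Icc] using
    sum_Ico_mul_rpow_le_of_add_neg ha hA hK hit (P := 0) (M := 1) le_rfl (N + 1)

theorem sum_Icc_mul_rpow_le_of_add_eq_zero (ha : ∀ n, 0 ≤ a n)
    (hA : ∀ N : ℕ, ∑ n ∈ Icc 1 N, a n ≤ K * (N : ℝ) ^ i) {t : ℝ} (hit : i + t = 0) (N : ℕ) :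
    ∑ d ∈ Icc 1 N, a d * (d : ℝ) ^ t ≤ K * 2 ^ i * max 1 (2 ^ t) * (Nat.log 2 N + 1) := by
  simpa [Ico_add_one_right_eq_Icc, hit] using
    sum_Ico_mul_rpow_le_geom_sum ha hA t (P := 0) (M := 1) le_rfl
      (Nat.lt_pow_succ_log_self one_lt_two N)

end Dyadic

noncomputable def dirichletSum (a : ℕ → ℝ) (s : ℝ) : ℝ :=
  ∑' n : ℕ, if 1 ≤ n then a n * (n : ℝ) ^ (-s) else 0

section DirichletSum

variable {a : ℕ → ℝ} {K i k : ℝ}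

theorem abs_dirichletSum_sub_sum_Icc_floor_le (ha : ∀ n, 0 ≤ a n)
    (hA : ∀ N : ℕ, ∑ n ∈ Icc 1 N, a n ≤ K * (N : ℝ) ^ i) (hK : 0 ≤ K) (hik : i < k)
    {x : ℝ} (hx : 0 < x) :
    |dirichletSum a k - ∑ n ∈ Icc 1 ⌊x⌋₊, a n * (n : ℝ) ^ (-k)| ≤
      K * 2 ^ i * max 1 (2 ^ (-k)) / (1 - 2 ^ (i + -k)) * (x / 2) ^ (i + -k) := by
  set f : ℕ → ℝ := fun n => if 1 ≤ n then a n * (n : ℝ) ^ (-k) else 0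
  have hf : ∀ n, 0 ≤ f n := fun n => by
    simp only [f]; split_ifs
    exacts [mul_nonneg (ha n) (by positivity), le_rfl]
  have hik' : i + -k < 0 := by linarith
  have hq : (2 : ℝ) ^ (i + -k) < 1 := rpow_lt_one_of_one_lt_of_neg one_lt_two hik'
  set N := ⌊x⌋₊
  set P := Nat.log 2 N
  have hsummable : Summable f := summable_of_sum_range_le hf fun L => by
    rw [sum_range_ite_eq_sum_Ico]
    exact sum_Ico_mul_rpow_le_of_add_neg ha hA hK hik' (P := 0) le_rfl L
  have htail : dirichletSum a k - ∑ n ∈ Icc 1 N, a n * (n : ℝ) ^ (-k) =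
      ∑' m, f (m + (N + 1)) := by
    rw [dirichletSum, ← hsummable.sum_add_tsum_nat_add (N + 1), sum_range_ite_eq_sum_Ico,
      Ico_add_one_right_eq_Icc, add_sub_cancel_left]
  have hxP : x / 2 ≤ 2 ^ P := by
    have h1 : x < N + 1 := Nat.lt_floor_add_one x
    have h2 : (N : ℝ) + 1 ≤ 2 ^ (P + 1) := by
      exact_mod_cast Nat.lt_pow_succ_log_self one_lt_two N
    rw [pow_succ] at h2
    linarith
  have hqP : ((2 : ℝ) ^ (i + -k)) ^ P ≤ (x / 2) ^ (i + -k) := by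
    rw [rpow_pow_comm zero_le_two]
    exact rpow_le_rpow_of_nonpos (by positivity) hxP hik'.le
  rw [htail, abs_of_nonneg (tsum_nonneg fun m => hf _)]
  refine Real.tsum_le_of_sum_range_le (fun m => hf _) fun L => ?_
  calc ∑ m ∈ range L, f (m + (N + 1)) = ∑ n ∈ Ico (N + 1) (N + 1 + L), a n * (n : ℝ) ^ (-k) := by
        rw [sum_Ico_eq_sum_range, add_tsub_cancel_left]
        exact sum_congr rfl fun m _ => by simp [f, add_comm]
    _ ≤ K * 2 ^ i * max 1 (2 ^ (-k)) / (1 - 2 ^ (i + -k)) * ((2 : ℝ) ^ (i + -k)) ^ P :=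
        sum_Ico_mul_rpow_le_of_add_neg ha hA hK hik' (Nat.pow_log_le_add_one 2 N) _
    _ ≤ _ := mul_le_mul_of_nonneg_left hqP (div_nonneg (by positivity) (sub_nonneg.2 hq.le))

theorem isBigO_sum_Icc_floor_mul_rpow_one (ha : ∀ n, 0 ≤ a n)
    (hA : ∀ N : ℕ, ∑ n ∈ Icc 1 N, a n ≤ K * (N : ℝ) ^ i) (hK : 0 ≤ K) {j : ℝ} (hij : i < j) :
    (fun T : ℝ => ∑ d ∈ Icc 1 ⌊T⌋₊, a d * (d : ℝ) ^ (-j)) =O[atTop] fun _ => (1 : ℝ) := by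
  refine IsBigO.of_bound (K * 2 ^ i * max 1 (2 ^ (-j)) / (1 - 2 ^ (i + -j))) ?_
  refine Eventually.of_forall fun T => ?_
  rw [norm_one, mul_one, norm_of_nonneg (sum_nonneg fun d _ => mul_nonneg (ha d) (by positivity))]
  exact sum_Icc_mul_rpow_le_of_add_neg ha hA hK (by linarith) _

theorem isBigO_sum_Icc_floor_mul_rpow_log (ha : ∀ n, 0 ≤ a n)
    (hA : ∀ N : ℕ, ∑ n ∈ Icc 1 N, a n ≤ K * (N : ℝ) ^ i) (hK : 0 ≤ K) :
    (fun T : ℝ => ∑ d ∈ Icc 1 ⌊T⌋₊, a d * (d : ℝ) ^ (-i)) =O[atTop] log := by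
  have hlogb : (fun T => logb 2 T + 1) =O[atTop] log :=
    (isBigO_logb_log.mono le_top).add isLittleO_const_log_atTop.isBigO
  refine IsBigO.trans (IsBigO.of_bound (K * 2 ^ i * max 1 (2 ^ (-i))) ?_) hlogb
  filter_upwards [eventually_ge_atTop 1] with T hT
  have hN : (1 : ℝ) ≤ ⌊T⌋₊ := by exact_mod_cast Nat.one_le_floor_iff _ |>.2 hT
  rw [norm_of_nonneg (sum_nonneg fun d _ => mul_nonneg (ha d) (by positivity)),
    norm_of_nonneg (by linarith [logb_nonneg one_lt_two hT])]
  calc ∑ d ∈ Icc 1 ⌊T⌋₊, a d * (d : ℝ) ^ (-i)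
      ≤ K * 2 ^ i * max 1 (2 ^ (-i)) * (Nat.log 2 ⌊T⌋₊ + 1) :=
        sum_Icc_mul_rpow_le_of_add_eq_zero ha hA (add_neg_cancel i) _
    _ ≤ K * 2 ^ i * max 1 (2 ^ (-i)) * (logb 2 T + 1) := by
        gcongr
        calc (Nat.log 2 ⌊T⌋₊ : ℝ) ≤ logb 2 ⌊T⌋₊ := by exact_mod_cast natLog_le_logb _ _
          _ ≤ logb 2 T := logb_le_logb_of_le one_lt_two (by linarith) (Nat.floor_le (by linarith))

theorem isBigO_rpow_mul_dirichletSum_sub (ha : ∀ n, 0 ≤ a n)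
    (hA : ∀ N : ℕ, ∑ n ∈ Icc 1 N, a n ≤ K * (N : ℝ) ^ i) (hK : 0 ≤ K) (hik : i < k) :
    (fun T : ℝ => T ^ k * (dirichletSum a k - ∑ d ∈ Icc 1 ⌊T⌋₊, a d * (d : ℝ) ^ (-k)))
      =O[atTop] fun T => T ^ i := by
  set C := K * 2 ^ i * max 1 (2 ^ (-k)) / (1 - 2 ^ (i + -k))
  refine IsBigO.of_bound (C / 2 ^ (i + -k)) ?_
  filter_upwards [eventually_gt_atTop 0] with T hT
  rw [norm_mul, norm_of_nonneg (rpow_pos_of_pos hT k).le, norm_eq_abs,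
    norm_of_nonneg (rpow_pos_of_pos hT i).le]
  calc T ^ k * |dirichletSum a k - ∑ d ∈ Icc 1 ⌊T⌋₊, a d * (d : ℝ) ^ (-k)|
      ≤ T ^ k * (C * (T / 2) ^ (i + -k)) := by
        gcongr
        exact abs_dirichletSum_sub_sum_Icc_floor_le ha hA hK hik hT
    _ = C / 2 ^ (i + -k) * (T ^ k * T ^ (i + -k)) := by
        rw [div_rpow hT.le zero_le_two]; ring
    _ = C / 2 ^ (i + -k) * T ^ i := by
        rw [← rpow_add hT, add_add_neg_cancel'_right]

end DirichletSum

/-- Let `f(s) = ∑ aₙ n^{-s}` and `g(s) = ∑ bₙ n^{-s}` be Dirichlet series with nonnegative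
coefficients and summatory functions `A(T) = ∑_{n ≤ T} aₙ`, `B(T) = ∑_{n ≤ T} bₙ`.
Suppose `A(T) = O(T^i)` and `B(T) = cT^k + O(T^j)` with `i ≤ j < k`.  Let
`cₙ = ∑_{pq = n} a_p b_q` and `C(T) = ∑_{n ≤ T} cₙ`.  Then
`C(T) = c f(k) T^k + O(T^j log T)` if `i = j`, and `C(T) = c f(k) T^k + O(T^j)` if
`i < j`; here `f(k) = ∑ aₙ n^{-k}`. -/
theorem stmt19 (a b : ℕ → ℝ) (ha : ∀ n, 0 ≤ a n) (hb : ∀ n, 0 ≤ b n)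
    (i j k c : ℝ) (hij : i ≤ j) (hjk : j < k)
    (hA : (fun T : ℝ => ∑ n ∈ Finset.Icc 1 ⌊T⌋₊, a n) =O[atTop] fun T : ℝ => T ^ i)
    (hB : (fun T : ℝ => (∑ n ∈ Finset.Icc 1 ⌊T⌋₊, b n) - c * T ^ k)
      =O[atTop] fun T : ℝ => T ^ j) :
    (i = j →
      (fun T : ℝ =>
          (∑ n ∈ Finset.Icc 1 ⌊T⌋₊, ∑ d ∈ n.divisors, a d * b (n / d)) -
            c * (∑' n : ℕ, if 1 ≤ n then a n * (n : ℝ) ^ (-k) else 0) * T ^ k)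
        =O[atTop] fun T : ℝ => T ^ j * Real.log T) ∧
    (i < j →
      (fun T : ℝ =>
          (∑ n ∈ Finset.Icc 1 ⌊T⌋₊, ∑ d ∈ n.divisors, a d * b (n / d)) -
            c * (∑' n : ℕ, if 1 ≤ n then a n * (n : ℝ) ^ (-k) else 0) * T ^ k)
        =O[atTop] fun T : ℝ => T ^ j) := by
  have hik : i < k := hij.trans_lt hjk
  obtain ⟨K, hK, hA'⟩ := exists_sum_Icc_le_mul_rpow_of_isBigO hA
  obtain ⟨M, hB'⟩ := exists_abs_le_mul_rpow_of_isBigO hB fun y =>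
    ⟨_, fun x hx => abs_sum_Icc_floor_sub_mul_rpow_le hb c k hx.1 hx.2⟩
  have hsplit := (sum_Icc_sum_divisors_sub_eventuallyEq a b c k (dirichletSum a k)).symm
  have hmain := isBigO_sum_mul_comp_div ha hB'
  have htail := (isBigO_rpow_mul_dirichletSum_sub ha hA' hK hik).const_mul_left c
  refine ⟨?_, fun hij' => ?_⟩
  · rintro rfl
    have hsum : (fun T : ℝ => T ^ i * ∑ d ∈ Icc 1 ⌊T⌋₊, a d * (d : ℝ) ^ (-i))
        =O[atTop] fun T => T ^ i * log T :=
      (isBigO_refl _ _).mul (isBigO_sum_Icc_floor_mul_rpow_log ha hA' hK)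
    have hpow : (fun T : ℝ => T ^ i) =O[atTop] fun T => T ^ i * log T := by
      simpa using (isBigO_refl _ _).mul (isLittleO_const_log_atTop (c := 1)).isBigO
    exact ((hmain.trans hsum).sub (htail.trans hpow)).congr' hsplit EventuallyEq.rfl
  · have hsum : (fun T : ℝ => T ^ j * ∑ d ∈ Icc 1 ⌊T⌋₊, a d * (d : ℝ) ^ (-j))
        =O[atTop] fun T => T ^ j := by
      simpa using (isBigO_refl _ _).mul (isBigO_sum_Icc_floor_mul_rpow_one ha hA' hK hij')
    exact ((hmain.trans hsum).sub (htail.trans (isBigO_rpow_rpow_atTop_of_le hij'.le))).congr'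
      hsplit EventuallyEq.rfl
end
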